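/- arXiv:1803.11006 — 9 statements merged into one kernel-verified Lean document; each statement's English description precedes it below -/
import Mathlib

section
/- An observable on a state space S is postprocessing clean if and only if it is indecomposable (i.e., every nonzero effect of the observable is indecomposable). -/
/-!
Effects are the nonnegative affine functions below the unit, and an effect is indecomposable
exactly when it spans an extreme ray of the cone of nonnegative affine functions.

If every nonzero effect of `A` is extreme, then in any `B → A` each term `ν x y • B_x` of
`A_y = ∑ x, ν x y • B_x` lies below `A_y`, hence is a multiple `c • A_y`, and the coefficients
`c` form a stochastic matrix giving `A → B`. Conversely, affine functions on `S` form a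
finite-dimensional space, so every effect is a finite sum of extreme ones. Splitting the effects
of `A` in this way gives an observable `C` with `C → A`; if `A` is clean, then `A → C` puts a
positive multiple of `A_x` below some extreme effect `C_i`, so `A_x` is proportional to `C_i`.
-/

open scoped BigOperators

/-- A real-valued function on the state space `S` is affine if it respects convex
combinations of states. -/
def AffineOn {V : Type*} [NormedAddCommGroup V] [NormedSpace ℝ V] (S : Set V)
    (e : S → ℝ) : Prop :=
  ∀ (s₁ s₂ : S) (p : ℝ), 0 ≤ p → p ≤ 1 →
    ∀ h : p • (s₁ : V) + (1 - p) • (s₂ : V) ∈ S,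
      e ⟨p • (s₁ : V) + (1 - p) • (s₂ : V), h⟩ = p * e s₁ + (1 - p) * e s₂

/-- An effect on `S`: an affine function with values in `[0,1]`. -/
def IsEffectFn {V : Type*} [NormedAddCommGroup V] [NormedSpace ℝ V] (S : Set V)
    (e : S → ℝ) : Prop :=
  AffineOn S e ∧ ∀ s, 0 ≤ e s ∧ e s ≤ 1

/-- An observable on the state space `S` with finite outcome set `Fin n`:
a family of effects summing to the unit effect. -/
structure Obs {V : Type*} [NormedAddCommGroup V] [NormedSpace ℝ V] (S : Set V) where
  n : ℕ
  eff : Fin n → S → ℝ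
  affine : ∀ x, AffineOn S (eff x)
  nonneg : ∀ x s, 0 ≤ eff x s
  normalized : ∀ s, ∑ x, eff x s = 1

variable {V : Type*} [NormedAddCommGroup V] [NormedSpace ℝ V] {S : Set V}

/-- `B` is a postprocessing of `A` (written `A → B`): `B` is obtained from `A` by a
stochastic matrix. -/
def Postprocess (A B : Obs S) : Prop :=
  ∃ ν : Fin A.n → Fin B.n → ℝ,
    (∀ x y, 0 ≤ ν x y) ∧ (∀ x, ∑ y, ν x y = 1) ∧
    ∀ y s, B.eff y s = ∑ x, ν x y * A.eff x s

/-- Postprocessing equivalence `A ↔ B`. -/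
def PPEquiv (A B : Obs S) : Prop := Postprocess A B ∧ Postprocess B A

/-- `A` is postprocessing clean: whenever `B → A` also `A → B`. -/
def PPClean (A : Obs S) : Prop := ∀ B : Obs S, Postprocess B A → Postprocess A B

/-- A nonzero effect is indecomposable if in any decomposition into two nonzero
effects, both summands are positive scalar multiples of it. -/
def IsIndecomposableEffect (S : Set V) (e : S → ℝ) : Prop :=
  e ≠ 0 ∧ ∀ e₁ e₂ : S → ℝ, IsEffectFn S e₁ → IsEffectFn S e₂ → e₁ ≠ 0 → e₂ ≠ 0 →
    e = e₁ + e₂ →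
    (∃ c : ℝ, 0 < c ∧ e₁ = c • e) ∧ (∃ c : ℝ, 0 < c ∧ e₂ = c • e)

/-- An observable is indecomposable if all its nonzero effects are indecomposable. -/
def IndecomposableObs (A : Obs S) : Prop :=
  ∀ x, A.eff x ≠ 0 → IsIndecomposableEffect S (A.eff x)

/-- An observable is extreme if any convex decomposition into observables with the
same outcome set is trivial. -/
def ExtremeObs (A : Obs S) : Prop :=
  ∀ B C : Fin A.n → S → ℝ,
    (∀ x, AffineOn S (B x)) → (∀ x s, 0 ≤ B x s) → (∀ s, ∑ x, B x s = 1) →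
    (∀ x, AffineOn S (C x)) → (∀ x s, 0 ≤ C x s) → (∀ s, ∑ x, C x s = 1) →
    ∀ lam : ℝ, 0 < lam → lam < 1 →
      (∀ x, A.eff x = lam • B x + (1 - lam) • C x) →
      B = A.eff ∧ C = A.eff

/-- `A` is simulable by the set of observables `𝓑`: `A` is obtained by mixing
finitely many members of `𝓑` (with a common outcome set) and postprocessing. -/
def Simulable (𝓑 : Set (Obs S)) (A : Obs S) : Prop :=
  ∃ (m k : ℕ) (B : Fin m → Obs S) (hk : ∀ i, (B i).n = k)
    (p : Fin m → ℝ) (ν : Fin m → Fin k → Fin A.n → ℝ),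
    (∀ i, B i ∈ 𝓑) ∧
    (∀ i, 0 ≤ p i) ∧ (∑ i, p i = 1) ∧
    (∀ i x y, 0 ≤ ν i x y) ∧ (∀ i x, ∑ y, ν i x y = 1) ∧
    ∀ y s, A.eff y s = ∑ i, ∑ x, p i * ν i x y * (B i).eff (Fin.cast (hk i).symm x) s

/-- The set of all `𝓑`-simulable observables. -/
def simSet (𝓑 : Set (Obs S)) : Set (Obs S) := {A | Simulable 𝓑 A}

/-- `A` is simulation irreducible: it can only be simulated by sets containing an
observable postprocessing equivalent to it. -/
def SimIrreducible (A : Obs S) : Prop :=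
  ∀ 𝓑 : Set (Obs S), Simulable 𝓑 A → ∃ B ∈ 𝓑, PPEquiv A B


def affineFunctions (S : Set V) : Submodule ℝ (S → ℝ) where
  carrier := {e | AffineOn S e}
  add_mem' {e f} he hf s₁ s₂ p hp hp1 h := by
    simp only [Pi.add_apply, he s₁ s₂ p hp hp1 h, hf s₁ s₂ p hp hp1 h]; ring
  zero_mem' _ _ _ _ _ _ := by simp
  smul_mem' c e he s₁ s₂ p hp hp1 h := by
    simp only [Pi.smul_apply, smul_eq_mul, he s₁ s₂ p hp hp1 h]; ring

/-- Jensen's inequality in both directions, for the extension of `e` by zero off `S`. -/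
theorem AffineOn.map_centerMass (hS : Convex ℝ S) {e : S → ℝ} (he : AffineOn S e) {ι : Type*}
    {F : Finset ι} {w : ι → ℝ} (hw0 : ∀ i ∈ F, 0 ≤ w i) (hw : 0 < ∑ i ∈ F, w i) (t : ι → S)
    (s : S) (hs : (s : V) = F.centerMass w (fun i => (t i : V))) :
    e s = F.centerMass w (fun i => e (t i)) := by
  classical
  set f : V → ℝ := fun v => if h : v ∈ S then e ⟨v, h⟩ else 0
  have hf : ∀ s : S, f s = e s := fun s => dif_pos s.2
  have hcomb : ∀ x ∈ S, ∀ y ∈ S, ∀ a b : ℝ, 0 ≤ a → 0 ≤ b → a + b = 1 →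
      f (a • x + b • y) = a • f x + b • f y := by
    intro x hx y hy a b ha hb hab
    obtain rfl : b = 1 - a := by linarith
    have hmem := hS hx hy ha hb hab
    simp only [f, dif_pos hmem, dif_pos hx, dif_pos hy, smul_eq_mul]
    exact he ⟨x, hx⟩ ⟨y, hy⟩ a ha (by linarith) hmem
  have hle := ConvexOn.map_centerMass_le
    ⟨hS, fun x hx y hy a b ha hb hab => (hcomb x hx y hy a b ha hb hab).le⟩
    hw0 hw fun i _ => (t i).2
  have hge := ConcaveOn.le_map_centerMass
    ⟨hS, fun x hx y hy a b ha hb hab => (hcomb x hx y hy a b ha hb hab).ge⟩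
    hw0 hw fun i _ => (t i).2
  rw [← hf, hs]
  simp only [Function.comp_def, hf] at hle hge
  exact le_antisymm hle hge

open Finset in
theorem AffineOn.map_affine_sum (hS : Convex ℝ S) {e : S → ℝ} (he : AffineOn S e) {ι : Type*}
    {F : Finset ι} {w : ι → ℝ} (hw : ∑ i ∈ F, w i = 1) (t : ι → S)
    (s : S) (hs : (s : V) = ∑ i ∈ F, w i • (t i : V)) :
    e s = ∑ i ∈ F, w i * e (t i) := by
  by_cases hw0 : ∀ i ∈ F, 0 ≤ w i
  · rw [he.map_centerMass hS hw0 (by rw [hw]; exact one_pos) t s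
      (by rw [centerMass, hw, inv_one, one_smul, hs]), centerMass, hw, inv_one, one_smul]
    simp only [smul_eq_mul]
  simp only [not_forall, not_le] at hw0
  obtain ⟨i₀, hi₀, hwi₀⟩ := hw0
  -- Move the negative weights to the other side: `(1 + b) • p = s + b • q` with `p`, `q` convex
  -- combinations of the `t i`, so `p` is a convex combination of `s` and `q`.
  set P := F.filter (fun i => 0 ≤ w i)
  set N := F.filter (fun i => ¬ 0 ≤ w i)
  set b := ∑ i ∈ N, -w i
  have hN : ∀ i ∈ N, 0 ≤ -w i := fun i hi => by linarith [(mem_filter.mp hi).2]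
  have hb : 0 < b := sum_pos' hN ⟨i₀, mem_filter.mpr ⟨hi₀, not_le.mpr hwi₀⟩, by linarith⟩
  have hsplit (g : ι → ℝ) : ∑ i ∈ F, g i = ∑ i ∈ P, g i + ∑ i ∈ N, g i :=
    (sum_filter_add_sum_filter_not F _ g).symm
  have hsplitV (g : ι → V) : ∑ i ∈ F, g i = ∑ i ∈ P, g i + ∑ i ∈ N, g i :=
    (sum_filter_add_sum_filter_not F _ g).symm
  have ha : ∑ i ∈ P, w i = 1 + b := by
    have := hsplit w; simp only [b, sum_neg_distrib]; linarith
  have hP : ∀ i ∈ P, 0 ≤ w i := fun i hi => (mem_filter.mp hi).2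
  have hpS : P.centerMass w (fun i => (t i : V)) ∈ S :=
    hS.centerMass_mem hP (by rw [ha]; linarith) fun i _ => (t i).2
  have hqS : N.centerMass (fun i => -w i) (fun i => (t i : V)) ∈ S :=
    hS.centerMass_mem hN hb fun i _ => (t i).2
  set p : S := ⟨_, hpS⟩
  set q : S := ⟨_, hqS⟩
  have hpq : (p : V) = (1 + b)⁻¹ • (s : V) + (1 - (1 + b)⁻¹) • (q : V) := by
    have hcoef : (1 - (1 + b)⁻¹) * b⁻¹ = (1 + b)⁻¹ := by field_simp; ring
    simp only [p, q, centerMass, ha, hs, hsplitV (fun i => w i • (t i : V)), smul_smul]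
    rw [show ∑ i ∈ N, -w i = b from rfl, hcoef]
    simp only [neg_smul, sum_neg_distrib, smul_add, smul_neg]
    abel
  have hmem : (1 + b)⁻¹ • (s : V) + (1 - (1 + b)⁻¹) • (q : V) ∈ S := hpq ▸ p.2
  have hep : e p = (1 + b)⁻¹ * e s + (1 - (1 + b)⁻¹) * e q :=
    (congrArg e (Subtype.ext hpq)).trans
      (he s q _ (by positivity) (inv_le_one_of_one_le₀ (by linarith)) hmem)
  have hep' : e p = (1 + b)⁻¹ * ∑ i ∈ P, w i * e (t i) := by
    rw [he.map_centerMass hS hP (by rw [ha]; linarith) t p rfl, centerMass, ha]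
    simp only [smul_eq_mul]
  have heq : e q = b⁻¹ * ∑ i ∈ N, -w i * e (t i) := by
    rw [he.map_centerMass hS hN hb t q rfl, centerMass]
    simp only [smul_eq_mul]; rfl
  rw [hsplit fun i => w i * e (t i)]
  rw [hep', heq] at hep
  simp only [neg_mul, sum_neg_distrib] at hep
  field_simp at hep
  exact mul_left_cancel₀ hb.ne' (by linear_combination -hep)

theorem finiteDimensional_affineFunctions [FiniteDimensional ℝ V] (hS : Convex ℝ S) :
    FiniteDimensional ℝ (affineFunctions S) := by
  obtain ⟨T, hTS, hspan, hT⟩ := exists_affineIndependent ℝ V S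
  have : Finite T := finite_set_of_fin_dim_affineIndependent ℝ hT
  let restrict : affineFunctions S →ₗ[ℝ] (T → ℝ) :=
    { toFun := fun e t => (e : S → ℝ) ⟨t, hTS t.2⟩
      map_add' := fun _ _ => rfl
      map_smul' := fun _ _ => rfl }
  refine FiniteDimensional.of_injective restrict ?_
  rw [← LinearMap.ker_eq_bot, LinearMap.ker_eq_bot']
  intro e he
  ext s
  have hs : (s : V) ∈ affineSpan ℝ (Set.range ((↑) : T → V)) := by
    rw [Subtype.range_coe, hspan]; exact subset_affineSpan ℝ S s.2
  obtain ⟨F, w, hw, hs⟩ := eq_affineCombination_of_mem_affineSpan hs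
  rw [Finset.affineCombination_eq_linear_combination _ _ _ hw] at hs
  rw [e.2.map_affine_sum hS hw (fun t => ⟨t, hTS t.2⟩) s hs]
  simp [show ∀ t : T, (e : S → ℝ) ⟨t, hTS t.2⟩ = 0 from congrFun he]

def orderIdeal (S : Set V) (e : S → ℝ) : Submodule ℝ (S → ℝ) where
  carrier := {g | AffineOn S g ∧ ∃ C : ℝ, 0 ≤ C ∧ |g| ≤ C • e}
  add_mem' := by
    rintro g h ⟨hg, C, hC, hgC⟩ ⟨hh, D, hD, hhD⟩
    refine ⟨(affineFunctions S).add_mem hg hh, C + D, add_nonneg hC hD, ?_⟩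
    rw [add_smul]
    exact (abs_add_le g h).trans (add_le_add hgC hhD)
  zero_mem' := ⟨(affineFunctions S).zero_mem, 0, le_rfl, by simp⟩
  smul_mem' := by
    rintro c g ⟨hg, C, hC, hgC⟩
    refine ⟨(affineFunctions S).smul_mem c hg, |c| * C, by positivity, fun s => ?_⟩
    simpa [abs_mul, mul_assoc] using mul_le_mul_of_nonneg_left (hgC s) (abs_nonneg c)

theorem orderIdeal_le_affineFunctions (e : S → ℝ) : orderIdeal S e ≤ affineFunctions S :=
  fun _ hg => hg.1

theorem mem_orderIdeal_of_le {e f : S → ℝ} (hf : AffineOn S f) (hf0 : 0 ≤ f) (hfe : f ≤ e) :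
    f ∈ orderIdeal S e :=
  ⟨hf, 1, zero_le_one, by rwa [abs_of_nonneg hf0, one_smul]⟩

theorem orderIdeal_mono {e f : S → ℝ} (hfe : f ≤ e) : orderIdeal S f ≤ orderIdeal S e :=
  fun _ ⟨hg, C, hC, hgC⟩ => ⟨hg, C, hC, hgC.trans (smul_le_smul_of_nonneg_left hfe hC)⟩

theorem finrank_orderIdeal_lt [FiniteDimensional ℝ V] (hS : Convex ℝ S) {e f g : S → ℝ}
    (hge : g ≤ e) (hf : f ∈ orderIdeal S e) (hfg : f ∉ orderIdeal S g) :
    Module.finrank ℝ (orderIdeal S g) < Module.finrank ℝ (orderIdeal S e) := by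
  have := finiteDimensional_affineFunctions hS
  have := Submodule.finiteDimensional_of_le (orderIdeal_le_affineFunctions e)
  exact Submodule.finrank_lt_finrank_of_lt
    (lt_of_le_of_ne (orderIdeal_mono hge) fun h => hfg (h ▸ hf))

theorem exists_isGreatest_smul_le {α : Type*} {e f : α → ℝ} (hf0 : 0 ≤ f) (hfe : f ≤ e)
    (hf : f ≠ 0) : ∃ t, IsGreatest {t : ℝ | t • f ≤ e} t := by
  obtain ⟨a, ha⟩ : ∃ a, 0 < f a := by
    by_contra! h
    exact hf (le_antisymm h hf0)
  have hne : {t : ℝ | t • f ≤ e}.Nonempty := ⟨1, show (1 : ℝ) • f ≤ e by rwa [one_smul]⟩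
  have hbdd : BddAbove {t : ℝ | t • f ≤ e} :=
    ⟨e a / f a, fun t ht => (le_div_iff₀ ha).2 (ht a)⟩
  have hclosed : IsClosed {t : ℝ | t • f ≤ e} :=
    isClosed_le (continuous_id.smul continuous_const) continuous_const
  exact ⟨_, hclosed.csSup_mem hne hbdd, fun _ ht => le_csSup hbdd ht⟩

theorem not_mem_orderIdeal_sub_smul {e f : S → ℝ} (hf0 : 0 ≤ f) {t : ℝ}
    (ht : IsGreatest {t : ℝ | t • f ≤ e} t) : f ∉ orderIdeal S (e - t • f) := by
  rintro ⟨-, C, hC, hfC⟩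
  have hδ : 0 < (C + 1)⁻¹ := by positivity
  suffices t + (C + 1)⁻¹ ∈ {t : ℝ | t • f ≤ e} by linarith [ht.2 this]
  intro s
  have hfs : f s ≤ (C + 1) * (e s - t * f s) := by
    have := hfC s
    have := ht.1 s
    simp only [Pi.abs_apply, Pi.smul_apply, Pi.sub_apply, smul_eq_mul, abs_of_nonneg (hf0 s)]
      at *
    nlinarith
  have := mul_le_mul_of_nonneg_left hfs hδ.le
  rw [← mul_assoc, inv_mul_cancel₀ (by linarith), one_mul] at this
  simp only [Pi.smul_apply, smul_eq_mul]
  linarith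

theorem exists_finrank_orderIdeal_sub_smul_lt [FiniteDimensional ℝ V] (hS : Convex ℝ S)
    {e f : S → ℝ} (hf : AffineOn S f) (hf0 : 0 ≤ f) (hfe : f ≤ e) (hf_ne : f ≠ 0) :
    ∃ t : ℝ, 1 ≤ t ∧ t • f ≤ e ∧
      Module.finrank ℝ (orderIdeal S (e - t • f)) < Module.finrank ℝ (orderIdeal S e) := by
  obtain ⟨t, ht⟩ := exists_isGreatest_smul_le hf0 hfe hf_ne
  have ht1 : 1 ≤ t := ht.2 (show (1 : ℝ) • f ≤ e by rwa [one_smul])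
  refine ⟨t, ht1, ht.1, finrank_orderIdeal_lt hS ?_ (mem_orderIdeal_of_le hf hf0 hfe)
    (not_mem_orderIdeal_sub_smul hf0 ht)⟩
  exact sub_le_self _ (smul_nonneg (by linarith) hf0)

def SpansExtremeRay (S : Set V) (e : S → ℝ) : Prop :=
  e ≠ 0 ∧ ∀ f : S → ℝ, AffineOn S f → 0 ≤ f → f ≤ e → ∃ c : ℝ, 0 ≤ c ∧ f = c • e

theorem SpansExtremeRay.exists_pos_smul {e f : S → ℝ} (he : SpansExtremeRay S e)
    (hf : AffineOn S f) (hf0 : 0 ≤ f) (hfe : f ≤ e) (hf_ne : f ≠ 0) :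
    ∃ c : ℝ, 0 < c ∧ f = c • e := by
  obtain ⟨c, hc, rfl⟩ := he.2 f hf hf0 hfe
  exact ⟨c, lt_of_le_of_ne hc fun h => hf_ne (by rw [← h, zero_smul]), rfl⟩

theorem SpansExtremeRay.smul {e : S → ℝ} (he : SpansExtremeRay S e) {c : ℝ} (hc : 0 < c) :
    SpansExtremeRay S (c • e) := by
  refine ⟨smul_ne_zero hc.ne' he.1, fun f hf hf0 hfe => ?_⟩
  obtain ⟨a, ha, hfa⟩ := he.2 (c⁻¹ • f) ((affineFunctions S).smul_mem _ hf)
    (smul_nonneg (inv_nonneg.2 hc.le) hf0)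
    (by rwa [inv_smul_le_iff_of_pos hc])
  refine ⟨a, ha, ?_⟩
  rw [smul_comm, ← hfa, smul_inv_smul₀ hc.ne']

theorem isIndecomposableEffect_iff_spansExtremeRay {e : S → ℝ} (he : IsEffectFn S e) :
    IsIndecomposableEffect S e ↔ SpansExtremeRay S e := by
  refine ⟨fun h => ⟨h.1, fun f hf hf0 hfe => ?_⟩, fun h => ⟨h.1, ?_⟩⟩
  · by_cases hf_ne : f = 0
    · exact ⟨0, le_rfl, by rw [hf_ne, zero_smul]⟩
    by_cases hfe' : f = e
    · exact ⟨1, zero_le_one, by rw [hfe', one_smul]⟩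
    have hf_eff : IsEffectFn S f := ⟨hf, fun s => ⟨hf0 s, (hfe s).trans (he.2 s).2⟩⟩
    have hef_eff : IsEffectFn S (e - f) :=
      ⟨(affineFunctions S).sub_mem he.1 hf,
        fun s => ⟨sub_nonneg.2 (hfe s), by
          simp only [Pi.sub_apply]; linarith [(hf_eff.2 s).1, (he.2 s).2]⟩⟩
    obtain ⟨⟨c, hc, hfc⟩, -⟩ := h.2 f (e - f) hf_eff hef_eff hf_ne
      (sub_ne_zero.2 (Ne.symm hfe')) (add_sub_cancel f e).symm
    exact ⟨c, hc.le, hfc⟩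
  · rintro e₁ e₂ ⟨he₁, he₁0⟩ ⟨he₂, he₂0⟩ h₁ h₂ rfl
    exact ⟨h.exists_pos_smul he₁ (fun s => (he₁0 s).1)
        (le_add_of_nonneg_right fun s => (he₂0 s).1) h₁,
      h.exists_pos_smul he₂ (fun s => (he₂0 s).1)
        (le_add_of_nonneg_left fun s => (he₁0 s).1) h₂⟩

/-- Induction on the dimension of the order ideal of `e`: splitting off a maximal multiple of some
`f ≤ e` not proportional to `e`, and then a maximal multiple of the remainder, writes `e` as a sum
of two functions whose order ideals are strictly smaller. -/
theorem exists_sum_spansExtremeRay [FiniteDimensional ℝ V] (hS : Convex ℝ S) {e : S → ℝ}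
    (he : AffineOn S e) (he0 : 0 ≤ e) :
    ∃ (k : ℕ) (f : Fin k → S → ℝ),
      (∀ j, AffineOn S (f j) ∧ 0 ≤ f j ∧ SpansExtremeRay S (f j)) ∧ e = ∑ j, f j := by
  induction hn : Module.finrank ℝ (orderIdeal S e) using Nat.strong_induction_on
    generalizing e with
  | _ n ih =>
  by_cases hray : SpansExtremeRay S e
  · exact ⟨1, fun _ => e, fun _ => ⟨he, he0, hray⟩, by simp⟩
  by_cases he_ne : e = 0
  · exact ⟨0, Fin.elim0, fun j => j.elim0, by simp [he_ne]⟩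
  obtain ⟨f, hf, hf0, hfe, hf_ray⟩ :
      ∃ f, AffineOn S f ∧ 0 ≤ f ∧ f ≤ e ∧ ∀ c : ℝ, 0 ≤ c → f ≠ c • e := by
    simpa [SpansExtremeRay, he_ne] using hray
  have hf_ne : f ≠ 0 := fun h => hf_ray 0 le_rfl (by rw [h, zero_smul])
  obtain ⟨t, ht1, hte, hlt₁⟩ := exists_finrank_orderIdeal_sub_smul_lt hS hf hf0 hfe hf_ne
  set r := e - t • f
  have hr : AffineOn S r := (affineFunctions S).sub_mem he ((affineFunctions S).smul_mem t hf)
  have hr0 : 0 ≤ r := sub_nonneg.2 hte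
  have hre : r ≤ e := sub_le_self _ (smul_nonneg (by linarith) hf0)
  have hr_ne : r ≠ 0 := by
    intro h
    refine hf_ray t⁻¹ (by positivity) ?_
    rw [sub_eq_zero.1 h, inv_smul_smul₀ (by positivity)]
  obtain ⟨u, hu1, hue, hlt₂⟩ := exists_finrank_orderIdeal_sub_smul_lt hS hr hr0 hre hr_ne
  obtain ⟨k₁, g₁, hg₁, hsum₁⟩ := ih _ (hn ▸ hlt₁) hr hr0 rfl
  obtain ⟨k₂, g₂, hg₂, hsum₂⟩ := ih _ (hn ▸ hlt₂)
    ((affineFunctions S).sub_mem he ((affineFunctions S).smul_mem u hr)) (sub_nonneg.2 hue) rfl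
  refine ⟨k₁ + k₂, Fin.append (fun j => u • g₁ j) g₂, fun j => ?_, ?_⟩
  · refine Fin.addCases (fun j => ?_) (fun j => ?_) j
    · obtain ⟨hg, hg0, hg_ray⟩ := hg₁ j
      rw [Fin.append_left]
      exact ⟨(affineFunctions S).smul_mem u hg, smul_nonneg (by linarith) hg0,
        hg_ray.smul (by linarith)⟩
    · rw [Fin.append_right]
      exact hg₂ j
  · rw [Fin.sum_univ_add]
    simp only [Fin.append_left, Fin.append_right, ← Finset.smul_sum, ← hsum₁, ← hsum₂]
    abel

namespace Obs

theorem isEffectFn_eff (A : Obs S) (y : Fin A.n) : IsEffectFn S (A.eff y) :=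
  ⟨A.affine y, fun s => ⟨A.nonneg y s, A.normalized s ▸
    Finset.single_le_sum (fun z _ => A.nonneg z s) (Finset.mem_univ y)⟩⟩

theorem smul_eff_le_of_postprocess {A B : Obs S} {ν : Fin A.n → Fin B.n → ℝ}
    (hν : ∀ x y, 0 ≤ ν x y) (hB : ∀ y s, B.eff y s = ∑ x, ν x y * A.eff x s)
    (x : Fin A.n) (y : Fin B.n) : ν x y • A.eff x ≤ B.eff y := fun s => by
  rw [hB]
  exact Finset.single_le_sum (f := fun x => ν x y * A.eff x s)
    (fun x _ => mul_nonneg (hν x y) (A.nonneg x s)) (Finset.mem_univ x)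

theorem exists_postprocess_of_split (A : Obs S) {k : Fin A.n → ℕ}
    (f : ∀ y, Fin (k y) → S → ℝ) (hf : ∀ y j, AffineOn S (f y j)) (hf0 : ∀ y j, 0 ≤ f y j)
    (hA : ∀ y, A.eff y = ∑ j, f y j) :
    ∃ C : Obs S, Postprocess C A ∧ ∀ i, ∃ y j, C.eff i = f y j := by
  classical
  let σ := Fintype.equivFin (Σ y, Fin (k y))
  have hA' (y : Fin A.n) (s : S) : A.eff y s = ∑ j, f y j s := by
    rw [hA y, Finset.sum_apply]
  let C : Obs S :=
    { n := Fintype.card (Σ y, Fin (k y))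
      eff := fun i => f (σ.symm i).1 (σ.symm i).2
      affine := fun i => hf _ _
      nonneg := fun i => hf0 _ _
      normalized := fun s => by
        rw [σ.symm.sum_comp (fun p => f p.1 p.2 s), Fintype.sum_sigma]
        simp only [← hA', A.normalized] }
  refine ⟨C, ⟨fun i y => if (σ.symm i).1 = y then 1 else 0, fun i y => by positivity,
    fun i => by simp, fun y s => ?_⟩, fun i => ⟨_, _, rfl⟩⟩
  rw [σ.symm.sum_comp (fun p => (if p.1 = y then 1 else 0) * f p.1 p.2 s), Fintype.sum_sigma]
  simp [hA']

end Obs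

theorem IndecomposableObs.ppClean (hS : S.Nonempty) {A : Obs S} (hA : IndecomposableObs A) :
    PPClean A := by
  rintro B ⟨ν, hν0, hν1, hBA⟩
  obtain ⟨s₀, hs₀⟩ := hS
  obtain ⟨x₀⟩ : Nonempty (Fin B.n) := by
    by_contra h
    rw [not_nonempty_iff] at h
    simpa using B.normalized ⟨s₀, hs₀⟩
  have hsum (y : Fin A.n) : A.eff y = ∑ x, ν x y • B.eff x := by
    ext s; simp [hBA]
  have hle := Obs.smul_eff_le_of_postprocess hν0 hBA
  have hnonneg (x : Fin B.n) (y : Fin A.n) : 0 ≤ ν x y • B.eff x :=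
    smul_nonneg (hν0 x y) (B.nonneg x)
  have hcoef (y : Fin A.n) : ∃ c : Fin B.n → ℝ,
      (∀ x, 0 ≤ c x) ∧ ∑ x, c x = 1 ∧ ∀ x, ν x y • B.eff x = c x • A.eff y := by
    by_cases hy : A.eff y = 0
    · refine ⟨Pi.single x₀ 1, fun x => ?_, by simp, fun x => ?_⟩
      · by_cases hx : x = x₀ <;> simp [hx]
      · rw [hy, smul_zero]
        exact le_antisymm (hy ▸ hle x y) (hnonneg x y)
    have hray := (isIndecomposableEffect_iff_spansExtremeRay (A.isEffectFn_eff y)).1 (hA y hy)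
    choose c hc0 hc using fun x => hray.2 _ ((affineFunctions S).smul_mem _ (B.affine x))
      (hnonneg x y) (hle x y)
    refine ⟨c, hc0, ?_, hc⟩
    have : (∑ x, c x) • A.eff y = (1 : ℝ) • A.eff y := by
      rw [Finset.sum_smul, ← Finset.sum_congr rfl fun x _ => hc x, ← hsum, one_smul]
    exact smul_left_injective ℝ hy this
  choose μ hμ0 hμ1 hμ using hcoef
  refine ⟨μ, hμ0, hμ1, fun x s => ?_⟩
  calc B.eff x s = ∑ y, ν x y * B.eff x s := by rw [← Finset.sum_mul, hν1, one_mul]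
    _ = ∑ y, μ y x * A.eff y s := Finset.sum_congr rfl fun y _ => congrFun (hμ y x) s

theorem PPClean.indecomposableObs [FiniteDimensional ℝ V] (hS : Convex ℝ S) {A : Obs S}
    (hA : PPClean A) : IndecomposableObs A := by
  intro x hx
  choose k f hf hsum using fun y => exists_sum_spansExtremeRay hS (A.affine y) (A.nonneg y)
  obtain ⟨C, hCA, hC⟩ := A.exists_postprocess_of_split f (fun y j => (hf y j).1)
    (fun y j => (hf y j).2.1) hsum
  obtain ⟨μ, hμ0, hμ1, hAC⟩ := hA C hCA
  obtain ⟨i, hi⟩ : ∃ i, μ x i ≠ 0 := by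
    by_contra! h
    simpa [h] using hμ1 x
  have hμ : 0 < μ x i := lt_of_le_of_ne (hμ0 x i) (Ne.symm hi)
  obtain ⟨y, j, hCi⟩ := hC i
  have hray : SpansExtremeRay S (C.eff i) := hCi ▸ (hf y j).2.2
  obtain ⟨c, hc, hxc⟩ := hray.exists_pos_smul ((affineFunctions S).smul_mem _ (A.affine x))
    (smul_nonneg hμ.le (A.nonneg x)) (Obs.smul_eff_le_of_postprocess hμ0 hAC x i)
    (smul_ne_zero hμ.ne' hx)
  have hAx : A.eff x = (μ x i)⁻¹ • c • C.eff i := by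
    rw [← hxc, inv_smul_smul₀ hμ.ne']
  rw [isIndecomposableEffect_iff_spansExtremeRay (A.isEffectFn_eff x), hAx, smul_smul]
  exact hray.smul (by positivity)

theorem statement0_general {V : Type*} [NormedAddCommGroup V] [NormedSpace ℝ V]
    [FiniteDimensional ℝ V] {S : Set V}
    (hSconv : Convex ℝ S) (hSne : S.Nonempty)
    (A : Obs S) :
    PPClean A ↔ IndecomposableObs A :=
  ⟨PPClean.indecomposableObs hSconv, IndecomposableObs.ppClean hSne⟩

/-- An observable on a state space `S` is postprocessing clean if and
only if it is indecomposable. -/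
theorem statement0 {V : Type*} [NormedAddCommGroup V] [NormedSpace ℝ V]
    [FiniteDimensional ℝ V] {S : Set V}
    (hScomp : IsCompact S) (hSconv : Convex ℝ S) (hSne : S.Nonempty)
    (A : Obs S) :
    PPClean A ↔ IndecomposableObs A :=
  statement0_general hSconv hSne A
end

section
/- If an observable A with finite outcome set X on a state space S is extreme, then the nonzero effects of A are linearly independent as elements of the vector space of affine real-valued functionals on S. -/
open scoped BigOperators

variable {V : Type*} [NormedAddCommGroup V] [NormedSpace ℝ V] {S : Set V}

lemma affineOn_smul' {V : Type*} [NormedAddCommGroup V] [NormedSpace ℝ V] {S : Set V}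
    {e : S → ℝ} (he : AffineOn S e) (r : ℝ) : AffineOn S (r • e) := by
  intro s₁ s₂ p hp hp1 h
  simp [Pi.smul_apply, he s₁ s₂ p hp hp1 h]
  ring

/-- The nonzero effects of an extreme observable are linearly
independent (in the vector space of affine functionals on `S`). -/
theorem statement1 {V : Type*} [NormedAddCommGroup V] [NormedSpace ℝ V]
    [FiniteDimensional ℝ V] {S : Set V}
    (hScomp : IsCompact S) (hSconv : Convex ℝ S) (hSne : S.Nonempty)
    (A : Obs S) (hA : ExtremeObs A) :
    LinearIndependent ℝ (fun x : {x : Fin A.n // A.eff x ≠ 0} => A.eff x.1) := by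
  classical
  rw [linearIndependent_iff']
  intro s g hsum i hi
  -- extend the coefficients to all of `Fin A.n`
  set c : Fin A.n → ℝ := fun x =>
    if h : A.eff x ≠ 0 then (if ⟨x, h⟩ ∈ s then g ⟨x, h⟩ else 0) else 0 with hc
  have hcval : ∀ j : {x : Fin A.n // A.eff x ≠ 0}, j ∈ s → c j.1 = g j := by
    intro j hj
    simp only [hc, dif_pos j.2]
    rw [if_pos]
    simpa using hj
  have hcsum : ∑ x : Fin A.n, c x • A.eff x = 0 := by
    rw [← hsum]
    rw [show (∑ j ∈ s, g j • A.eff j.1) = ∑ x ∈ s.image Subtype.val, c x • A.eff x by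
      rw [Finset.sum_image (fun a _ b _ h => Subtype.ext h)]
      exact Finset.sum_congr rfl fun j hj => by rw [hcval j hj]]
    apply (Finset.sum_subset (Finset.subset_univ _) _).symm
    intro x _ hx
    by_cases h : A.eff x = 0
    · simp [h]
    · have : c x = 0 := by
        simp only [hc, dif_pos h]
        rw [if_neg]
        intro hmem
        exact hx (Finset.mem_image.mpr ⟨⟨x, h⟩, hmem, rfl⟩)
      simp [this]
  -- choose a small parameter `t`
  set M : ℝ := ∑ x : Fin A.n, |c x| with hM
  have hM0 : 0 ≤ M := Finset.sum_nonneg fun x _ => abs_nonneg _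
  set t : ℝ := 1 / (1 + M) with ht
  have h1M : (0:ℝ) < 1 + M := by linarith
  have ht0 : 0 < t := by positivity
  have htc : ∀ x, |t * c x| ≤ 1 := by
    intro x
    have hcx : |c x| ≤ M := Finset.single_le_sum (fun y _ => abs_nonneg (c y))
      (Finset.mem_univ x)
    rw [abs_mul, abs_of_pos ht0]
    rw [ht, div_mul_eq_mul_div, one_mul, div_le_one h1M]
    linarith
  -- the perturbed observables
  set B : Fin A.n → S → ℝ := fun x => (1 + t * c x) • A.eff x with hB
  set C : Fin A.n → S → ℝ := fun x => (1 - t * c x) • A.eff x with hCdef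
  have hBnn : ∀ x s', 0 ≤ B x s' := by
    intro x s'
    have : 0 ≤ 1 + t * c x := by
      have := (abs_le.mp (htc x)).1; linarith
    exact mul_nonneg this (A.nonneg x s')
  have hCnn : ∀ x s', 0 ≤ C x s' := by
    intro x s'
    have : 0 ≤ 1 - t * c x := by
      have := (abs_le.mp (htc x)).2; linarith
    exact mul_nonneg this (A.nonneg x s')
  have hcs : ∀ s', ∑ x, c x * A.eff x s' = 0 := by
    intro s'
    have := congrFun hcsum s'
    simpa using this
  have hBsum : ∀ s', ∑ x, B x s' = 1 := by
    intro s'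
    have : ∑ x, B x s' = ∑ x, (A.eff x s' + t * (c x * A.eff x s')) := by
      apply Finset.sum_congr rfl; intro x _; simp [hB]; ring
    rw [this, Finset.sum_add_distrib, ← Finset.mul_sum, hcs s', A.normalized s']
    ring
  have hCsum : ∀ s', ∑ x, C x s' = 1 := by
    intro s'
    have : ∑ x, C x s' = ∑ x, (A.eff x s' - t * (c x * A.eff x s')) := by
      apply Finset.sum_congr rfl; intro x _; simp [hCdef]; ring
    rw [this, Finset.sum_sub_distrib, ← Finset.mul_sum, hcs s', A.normalized s']
    ring
  have hmix : ∀ x, A.eff x = (1/2 : ℝ) • B x + (1 - 1/2 : ℝ) • C x := by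
    intro x
    funext s'
    simp [hB, hCdef]
    ring
  have key := hA B C (fun x => affineOn_smul' (A.affine x) _) hBnn hBsum
    (fun x => affineOn_smul' (A.affine x) _) hCnn hCsum (1/2) (by norm_num)
    (by norm_num) hmix
  have hBeq : B = A.eff := key.1
  -- conclude
  have hx := congrFun hBeq i.1
  have : (t * c i.1) • A.eff i.1 = 0 := by
    have : (1 + t * c i.1) • A.eff i.1 = A.eff i.1 := hx
    calc (t * c i.1) • A.eff i.1
        = (1 + t * c i.1) • A.eff i.1 - (1:ℝ) • A.eff i.1 := by
          rw [← sub_smul]; ring_nf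
      _ = 0 := by rw [this, one_smul, sub_self]
  rcases smul_eq_zero.mp this with h | h
  · have hci : c i.1 = 0 := by
      rcases mul_eq_zero.mp h with h' | h'
      · exact absurd h' (ne_of_gt ht0)
      · exact h'
    rw [← hcval i hi, hci]
  · exact absurd h i.2
end

section
/- A postprocessing clean observable A on a state space S is extreme if and only if its nonzero effects are linearly independent as elements of the vector space of affine real-valued functionals on S. -/
open scoped BigOperators

variable {V : Type*} [NormedAddCommGroup V] [NormedSpace ℝ V] {S : Set V}

section Helpers

variable {V : Type*} [NormedAddCommGroup V] [NormedSpace ℝ V] {S : Set V}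

private lemma key_sum {n : ℕ} (E : Fin n → S → ℝ)
    [Fintype {x : Fin n // E x ≠ 0}] (f : Fin n → ℝ) (s : S) :
    ∑ z : {x : Fin n // E x ≠ 0}, f z.1 * E z.1 s = ∑ z, f z * E z s := by
  classical
  rw [← Finset.sum_subtype (Finset.univ.filter (fun x => E x ≠ 0)) (by simp)
    (fun z => f z * E z s), Finset.sum_filter]
  apply Finset.sum_congr rfl
  intro z _
  by_cases h : E z ≠ 0
  · rw [if_pos h]
  · rw [if_neg h]
    push_neg at h
    rw [h]
    simp

private lemma li_coeff {n : ℕ} {E : Fin n → S → ℝ} [Fintype {x : Fin n // E x ≠ 0}]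
    (hli : LinearIndependent ℝ (fun x : {x : Fin n // E x ≠ 0} => E x.1))
    (g : Fin n → ℝ) (hg : ∀ s, ∑ z, g z * E z s = 0) :
    ∀ z, E z ≠ 0 → g z = 0 := by
  classical
  have h0 : ∑ z : {x : Fin n // E x ≠ 0},
      (fun z : {x : Fin n // E x ≠ 0} => g z.1) z • E z.1 = 0 := by
    funext s
    simp only [Finset.sum_apply, Pi.smul_apply, smul_eq_mul, Pi.zero_apply]
    rw [key_sum]
    exact hg s
  have h1 := Fintype.linearIndependent_iff.mp hli (fun z => g z.1) h0
  intro z hz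
  exact h1 ⟨z, hz⟩

end Helpers

/-- A postprocessing clean observable is extreme if and only if its
nonzero effects are linearly independent. -/
theorem statement2 {V : Type*} [NormedAddCommGroup V] [NormedSpace ℝ V]
    [FiniteDimensional ℝ V] {S : Set V}
    (hScomp : IsCompact S) (hSconv : Convex ℝ S) (hSne : S.Nonempty)
    (A : Obs S) (hclean : PPClean A) :
    ExtremeObs A ↔
      LinearIndependent ℝ (fun x : {x : Fin A.n // A.eff x ≠ 0} => A.eff x.1) := by
  classical
  constructor
  · -- extreme → linearly independent
    intro hext
    rw [Fintype.linearIndependent_iff]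
    intro g hg
    by_contra hne
    push_neg at hne
    obtain ⟨z₀, hz₀⟩ := hne
    set c : Fin A.n → ℝ := fun x => if h : A.eff x ≠ 0 then g ⟨x, h⟩ else 0 with hc
    have hcz : c z₀.1 = g z₀ := by
      simp only [hc, dif_pos z₀.2]
    have hcsum : ∀ s, ∑ x, c x * A.eff x s = 0 := by
      intro s
      rw [← key_sum A.eff c s]
      have h2 : ∑ z : {x // A.eff x ≠ 0}, c z.1 * A.eff z.1 s
          = ∑ z : {x // A.eff x ≠ 0}, g z * A.eff z.1 s := by
        apply Finset.sum_congr rfl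
        intro z _
        simp only [hc, dif_pos z.2]
      rw [h2]
      have h3 := congrFun hg s
      simpa only [Finset.sum_apply, Pi.smul_apply, smul_eq_mul, Pi.zero_apply] using h3
    set M : ℝ := ∑ x, |c x| with hM
    have hM0 : 0 ≤ M := Finset.sum_nonneg fun _ _ => abs_nonneg _
    set ε : ℝ := (1 + M)⁻¹ with hε
    have hε0 : 0 < ε := by positivity
    have hεM : ε * (1 + M) = 1 := inv_mul_cancel₀ (by positivity)
    have hcle : ∀ x, |c x| ≤ M := fun x =>
      Finset.single_le_sum (fun i _ => abs_nonneg (c i)) (Finset.mem_univ x)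
    have hpos : ∀ x, 0 ≤ 1 + ε * c x ∧ 0 ≤ 1 - ε * c x := by
      intro x
      constructor <;> nlinarith [hcle x, neg_abs_le (c x), le_abs_self (c x), hε0, hεM]
    set Bf : Fin A.n → S → ℝ := fun x s => (1 + ε * c x) * A.eff x s with hBf
    set Cf : Fin A.n → S → ℝ := fun x s => (1 - ε * c x) * A.eff x s with hCf
    have hsum : ∀ (t : Fin A.n → ℝ) (s : S),
        ∑ x, (1 + t x * c x) * A.eff x s = 1 + (∑ x, t x * (c x * A.eff x s)) := by
      intro t s
      have h4 : ∀ x : Fin A.n, (1 + t x * c x) * A.eff x s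
          = A.eff x s + t x * (c x * A.eff x s) := by
        intro x; ring
      rw [Finset.sum_congr rfl fun x _ => h4 x, Finset.sum_add_distrib, A.normalized s]
    obtain ⟨hBA, -⟩ := hext Bf Cf
      (by
        intro x s₁ s₂ p hp0 hp1 h
        simp only [hBf]
        rw [A.affine x s₁ s₂ p hp0 hp1 h]
        ring)
      (fun x s => mul_nonneg (hpos x).1 (A.nonneg x s))
      (by
        intro s
        have h5 := hsum (fun _ => ε) s
        simp only [hBf]
        rw [h5, ← Finset.mul_sum, hcsum s, mul_zero, add_zero])
      (by
        intro x s₁ s₂ p hp0 hp1 h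
        simp only [hCf]
        rw [A.affine x s₁ s₂ p hp0 hp1 h]
        ring)
      (fun x s => mul_nonneg (hpos x).2 (A.nonneg x s))
      (by
        intro s
        have h5 := hsum (fun _ => -ε) s
        simp only [hCf]
        have h4 : ∀ x : Fin A.n, (1 - ε * c x) * A.eff x s
            = (1 + (-ε) * c x) * A.eff x s := by
          intro x; ring
        rw [Finset.sum_congr rfl fun x _ => h4 x, h5, ← Finset.mul_sum, hcsum s, mul_zero,
          add_zero])
      (1/2 : ℝ) (by norm_num) (by norm_num)
      (by
        intro x
        funext s
        simp only [hBf, hCf, Pi.add_apply, Pi.smul_apply, smul_eq_mul]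
        ring)
    obtain ⟨s, hs⟩ := Function.ne_iff.mp z₀.2
    simp only [Pi.zero_apply] at hs
    have h5 : (1 + ε * c z₀.1) * A.eff z₀.1 s = A.eff z₀.1 s := by
      have h6 := congrFun (congrFun hBA z₀.1) s
      simpa only [hBf] using h6
    have h6 : ε * c z₀.1 * A.eff z₀.1 s = 0 := by nlinarith [h5]
    rcases mul_eq_zero.mp h6 with h7 | h7
    · rcases mul_eq_zero.mp h7 with h8 | h8
      · exact absurd h8 (ne_of_gt hε0)
      · exact hz₀ (hcz ▸ h8)
    · exact hs h7
  · -- linearly independent → extreme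
    intro hli Bf Cf hBaff hBnn hBsum hCaff hCnn hCsum lam hl0 hl1 hABC
    have hl1' : (0:ℝ) < 1 - lam := by linarith
    set Geff : Fin (A.n + A.n) → S → ℝ :=
      Fin.addCases (fun x => fun s => lam * Bf x s) (fun x => fun s => (1 - lam) * Cf x s)
      with hGeff
    have hGL : ∀ x, Geff (Fin.castAdd A.n x) = fun s => lam * Bf x s := fun x =>
      Fin.addCases_left x
    have hGR : ∀ x, Geff (Fin.natAdd A.n x) = fun s => (1 - lam) * Cf x s := fun x =>
      Fin.addCases_right x
    have hABCs : ∀ x s, A.eff x s = lam * Bf x s + (1 - lam) * Cf x s := by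
      intro x s
      have h1 := congrFun (hABC x) s
      simpa only [Pi.add_apply, Pi.smul_apply, smul_eq_mul] using h1
    set G : Obs S :=
      { n := A.n + A.n
        eff := Geff
        affine := by
          intro i
          induction i using Fin.addCases with
          | left x =>
            rw [hGL]
            intro s₁ s₂ p hp0 hp1 h
            dsimp only
            rw [hBaff x s₁ s₂ p hp0 hp1 h]
            ring
          | right x =>
            rw [hGR]
            intro s₁ s₂ p hp0 hp1 h
            dsimp only
            rw [hCaff x s₁ s₂ p hp0 hp1 h]
            ring
        nonneg := by
          intro i
          induction i using Fin.addCases with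
          | left x =>
            rw [hGL]
            exact fun s => mul_nonneg hl0.le (hBnn x s)
          | right x =>
            rw [hGR]
            exact fun s => mul_nonneg hl1'.le (hCnn x s)
        normalized := by
          intro s
          rw [Fin.sum_univ_add (f := fun i => Geff i s)]
          have e1 : ∑ x, Geff (Fin.castAdd A.n x) s = lam * ∑ x, Bf x s := by
            rw [Finset.mul_sum]
            exact Finset.sum_congr rfl fun x _ => by rw [hGL]
          have e2 : ∑ x, Geff (Fin.natAdd A.n x) s = (1 - lam) * ∑ x, Cf x s := by
            rw [Finset.mul_sum]
            exact Finset.sum_congr rfl fun x _ => by rw [hGR]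
          rw [e1, e2, hBsum s, hCsum s]
          ring } with hG
    have hGeffL : ∀ x, G.eff (Fin.castAdd A.n x) = fun s => lam * Bf x s := hGL
    have hGeffR : ∀ x, G.eff (Fin.natAdd A.n x) = fun s => (1 - lam) * Cf x s := hGR
    have hGA : Postprocess G A := by
      refine ⟨Fin.addCases (motive := fun _ => Fin A.n → ℝ)
        (fun x y => if y = x then 1 else 0) (fun x y => if y = x then 1 else 0),
        ?_, ?_, ?_⟩
      · intro i y
        induction i using Fin.addCases with
        | left x =>
          simp only [Fin.addCases_left]
          split <;> norm_num
        | right x =>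
          simp only [Fin.addCases_right]
          split <;> norm_num
      · intro i
        induction i using Fin.addCases with
        | left x =>
          simp only [Fin.addCases_left]
          simp
        | right x =>
          simp only [Fin.addCases_right]
          simp
      · intro y s
        rw [Fin.sum_univ_add (f := fun i => Fin.addCases (motive := fun _ => Fin A.n → ℝ)
          (fun x y => if y = x then 1 else 0) (fun x y => if y = x then 1 else 0) i y
            * G.eff i s)]
        simp only [Fin.addCases_left, Fin.addCases_right, hGeffL, hGeffR, hGL, hGR, ite_mul,
          one_mul, zero_mul, Finset.sum_ite_eq, Finset.mem_univ, if_true]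
        exact hABCs y s
    obtain ⟨ν, hνnn, hνrow, hνeff⟩ := hclean G hGA
    set μ : Fin A.n → Fin A.n → ℝ :=
      fun z x => ν z (Fin.castAdd A.n x) + ν z (Fin.natAdd A.n x) with hμ
    have hμnn : ∀ z x, 0 ≤ μ z x := fun z x => add_nonneg (hνnn z _) (hνnn z _)
    have hμrow : ∀ z, ∑ x, μ z x = 1 := by
      intro z
      have h1 := hνrow z
      rw [Fin.sum_univ_add (f := fun i => ν z i)] at h1
      simp only [hμ]
      rw [Finset.sum_add_distrib]
      exact h1
    have hμA : ∀ x s, ∑ z, μ z x * A.eff z s = A.eff x s := by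
      intro x s
      have hg1 : lam * Bf x s = ∑ z, ν z (Fin.castAdd A.n x) * A.eff z s := by
        rw [← hνeff (Fin.castAdd A.n x) s]
        exact (congrFun (hGeffL x) s).symm
      have hg2 : (1 - lam) * Cf x s = ∑ z, ν z (Fin.natAdd A.n x) * A.eff z s := by
        rw [← hνeff (Fin.natAdd A.n x) s]
        exact (congrFun (hGeffR x) s).symm
      have e : ∀ z : Fin A.n, μ z x * A.eff z s
          = ν z (Fin.castAdd A.n x) * A.eff z s + ν z (Fin.natAdd A.n x) * A.eff z s := by
        intro z
        simp only [hμ]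
        ring
      rw [Finset.sum_congr rfl fun z _ => e z, Finset.sum_add_distrib, ← hg1, ← hg2]
      exact (hABCs x s).symm
    have hkey : ∀ x : Fin A.n, A.eff x ≠ 0 → ∀ z, A.eff z ≠ 0 →
        μ z x = if z = x then 1 else 0 := by
      intro x hx
      have hg : ∀ s, ∑ z, (μ z x - if z = x then 1 else 0) * A.eff z s = 0 := by
        intro s
        have e : ∀ z : Fin A.n, (μ z x - if z = x then 1 else 0) * A.eff z s
            = μ z x * A.eff z s - (if z = x then A.eff z s else 0) := by
          intro z
          by_cases h : z = x <;> simp [h] <;> ring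
        rw [Finset.sum_congr rfl fun z _ => e z, Finset.sum_sub_distrib, hμA x s,
          Finset.sum_ite_eq' Finset.univ x (fun z => A.eff z s)]
        simp
      intro z hz
      exact sub_eq_zero.mp (li_coeff hli (fun z => μ z x - if z = x then 1 else 0) hg z hz)
    have hdiag : ∀ z : Fin A.n, A.eff z ≠ 0 → ∀ x, x ≠ z → μ z x = 0 := by
      intro z hz x hxz
      have h1 : μ z z = 1 := by simpa using hkey z hz z hz
      have h2 := Finset.sum_erase_add Finset.univ (μ z) (Finset.mem_univ z)
      rw [hμrow z] at h2
      have h3 : ∑ x ∈ Finset.univ.erase z, μ z x = 0 := by linarith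
      exact (Finset.sum_eq_zero_iff_of_nonneg (fun i _ => hμnn z i)).mp h3 x
        (Finset.mem_erase.mpr ⟨hxz, Finset.mem_univ x⟩)
    have hν0 : ∀ z, A.eff z ≠ 0 → ∀ x, x ≠ z →
        ν z (Fin.castAdd A.n x) = 0 ∧ ν z (Fin.natAdd A.n x) = 0 := by
      intro z hz x hxz
      have h1 := hdiag z hz x hxz
      simp only [hμ] at h1
      have h2 := hνnn z (Fin.castAdd A.n x)
      have h3 := hνnn z (Fin.natAdd A.n x)
      constructor <;> linarith
    have hBzero : ∀ x, A.eff x = 0 → (∀ s, Bf x s = 0) ∧ (∀ s, Cf x s = 0) := by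
      intro x hx
      have hABz : ∀ s, lam * Bf x s + (1 - lam) * Cf x s = 0 := by
        intro s
        rw [← hABCs x s, hx]
        simp
      constructor <;> intro s
      · have h1 : lam * Bf x s = 0 := by
          nlinarith [hABz s, mul_nonneg hl0.le (hBnn x s), mul_nonneg hl1'.le (hCnn x s)]
        rcases mul_eq_zero.mp h1 with h | h
        · exact absurd h hl0.ne'
        · exact h
      · have h1 : (1 - lam) * Cf x s = 0 := by
          nlinarith [hABz s, mul_nonneg hl0.le (hBnn x s), mul_nonneg hl1'.le (hCnn x s)]
        rcases mul_eq_zero.mp h1 with h | h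
        · exact absurd h hl1'.ne'
        · exact h
    have hBform : ∀ x, A.eff x ≠ 0 → ∀ s,
        lam * Bf x s = ν x (Fin.castAdd A.n x) * A.eff x s := by
      intro x hx s
      have h1 := hνeff (Fin.castAdd A.n x) s
      rw [show G.eff (Fin.castAdd A.n x) s = lam * Bf x s from congrFun (hGeffL x) s] at h1
      rw [h1]
      apply Finset.sum_eq_single x
      · intro z _ hzx
        by_cases hz : A.eff z = 0
        · rw [show A.eff z s = 0 from congrFun hz s, mul_zero]
        · rw [(hν0 z hz x (Ne.symm hzx)).1, zero_mul]
      · intro h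
        exact absurd (Finset.mem_univ x) h
    set c : Fin A.n → ℝ := fun x =>
      if A.eff x ≠ 0 then ν x (Fin.castAdd A.n x) / lam - 1 else 0 with hcdef
    have hBc : ∀ x, A.eff x ≠ 0 → ∀ s, Bf x s = (1 + c x) * A.eff x s := by
      intro x hx s
      have h1 := hBform x hx s
      simp only [hcdef, if_pos hx]
      field_simp
      linarith [h1]
    have hcsum : ∀ s, ∑ x, c x * A.eff x s = 0 := by
      intro s
      have e : ∀ x : Fin A.n, c x * A.eff x s = Bf x s - A.eff x s := by
        intro x
        by_cases hx : A.eff x = 0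
        · rw [(hBzero x hx).1 s, show A.eff x s = 0 from congrFun hx s]
          ring
        · rw [hBc x hx s]
          ring
      rw [Finset.sum_congr rfl fun x _ => e x, Finset.sum_sub_distrib, hBsum s,
        A.normalized s, sub_self]
    have hc0 := li_coeff hli c hcsum
    have hBA : Bf = A.eff := by
      funext x s
      by_cases hx : A.eff x = 0
      · rw [(hBzero x hx).1 s, show A.eff x s = 0 from congrFun hx s]
      · rw [hBc x hx s, hc0 x hx]
        ring
    refine ⟨hBA, ?_⟩
    funext x s
    have h1 := hABCs x s
    rw [show Bf x s = A.eff x s from congrFun (congrFun hBA x) s] at h1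
    have h2 : (1 - lam) * Cf x s = (1 - lam) * A.eff x s := by linarith
    exact mul_left_cancel₀ hl1'.ne' h2
end

section
/- For every observable A on a state space S with finite outcome set, there exists an observable Â whose nonzero effects are pairwise linearly independent (no effect is a scalar multiple of another) such that A and Â are postprocessing equivalent, i.e., A → Â and Â → A. -/
open scoped BigOperators

variable {V : Type*} [NormedAddCommGroup V] [NormedSpace ℝ V] {S : Set V}

lemma pp_refl (A : Obs S) : Postprocess A A := by
  refine ⟨fun x y => if x = y then 1 else 0, ?_, ?_, ?_⟩
  · intro x y; by_cases h : x = y <;> simp [h]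
  · intro x; simp
  · intro y s
    rw [Finset.sum_eq_single y]
    · simp
    · intro b _ hb; simp [hb]
    · simp

lemma pp_trans {A B C : Obs S} (h1 : Postprocess A B) (h2 : Postprocess B C) :
    Postprocess A C := by
  obtain ⟨ν, hν0, hν1, hν⟩ := h1
  obtain ⟨μ, hμ0, hμ1, hμ⟩ := h2
  refine ⟨fun x z => ∑ y, ν x y * μ y z, ?_, ?_, ?_⟩
  · intro x z; exact Finset.sum_nonneg fun y _ => mul_nonneg (hν0 x y) (hμ0 y z)
  · intro x
    rw [Finset.sum_comm]
    have h : ∀ y : Fin B.n, ∑ z, ν x y * μ y z = ν x y := by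
      intro y; rw [← Finset.mul_sum, hμ1, mul_one]
    simp_rw [h]
    exact hν1 x
  · intro z s
    rw [hμ]
    have h : ∀ y : Fin B.n, μ y z * B.eff y s = ∑ x, μ y z * (ν x y * A.eff x s) := by
      intro y; rw [← Finset.mul_sum, ← hν]
    simp_rw [h]
    rw [Finset.sum_comm]
    refine Finset.sum_congr rfl fun x _ => ?_
    rw [Finset.sum_mul]
    refine Finset.sum_congr rfl fun y _ => ?_
    ring

/-- Helper: splitting a sum over `Fin n` at two distinct indices. -/
lemma sum_split {n : ℕ} {x y : Fin n} (hxy : x ≠ y) (f : Fin n → ℝ) :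
    ∑ z, f z = f x + (f y + ∑ z ∈ (Finset.univ.erase x).erase y, f z) := by
  rw [← Finset.add_sum_erase _ f (Finset.mem_univ x),
      ← Finset.add_sum_erase _ f (Finset.mem_erase.mpr ⟨hxy.symm, Finset.mem_univ y⟩)]

/-- Every observable is postprocessing equivalent to an observable whose
nonzero effects are pairwise linearly independent (no one a scalar multiple of another). -/
theorem statement3 {V : Type*} [NormedAddCommGroup V] [NormedSpace ℝ V]
    [FiniteDimensional ℝ V] {S : Set V}
    (hScomp : IsCompact S) (hSconv : Convex ℝ S) (hSne : S.Nonempty)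
    (A : Obs S) :
    ∃ Ahat : Obs S, PPEquiv A Ahat ∧
      ∀ x y : Fin Ahat.n, x ≠ y → Ahat.eff x ≠ 0 → Ahat.eff y ≠ 0 →
        ∀ c : ℝ, Ahat.eff x ≠ c • Ahat.eff y := by
  clear hScomp hSconv hSne
  classical
  suffices key : ∀ (k : ℕ) (A : Obs S),
      (Finset.univ.filter fun x => A.eff x ≠ 0).card ≤ k →
      ∃ Ahat : Obs S, PPEquiv A Ahat ∧
        ∀ x y : Fin Ahat.n, x ≠ y → Ahat.eff x ≠ 0 → Ahat.eff y ≠ 0 →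
          ∀ c : ℝ, Ahat.eff x ≠ c • Ahat.eff y from key _ A le_rfl
  intro k
  induction k with
  | zero =>
    intro A hA
    refine ⟨A, ⟨pp_refl A, pp_refl A⟩, fun x y hxy hx hy c hceq => ?_⟩
    have hmem : x ∈ Finset.univ.filter fun z => A.eff z ≠ 0 :=
      Finset.mem_filter.mpr ⟨Finset.mem_univ x, hx⟩
    rw [Finset.card_eq_zero.mp (Nat.le_zero.mp hA)] at hmem
    exact absurd hmem (Finset.notMem_empty x)
  | succ k ih =>
    intro A hA
    by_cases hgood : ∀ x y : Fin A.n, x ≠ y → A.eff x ≠ 0 → A.eff y ≠ 0 →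
        ∀ c : ℝ, A.eff x ≠ c • A.eff y
    · exact ⟨A, ⟨pp_refl A, pp_refl A⟩, hgood⟩
    push_neg at hgood
    obtain ⟨x, y, hxy, hx, hy, c, hc⟩ := hgood
    -- the proportionality constant is positive
    obtain ⟨s₁, hs₁⟩ : ∃ s, A.eff x s ≠ 0 := by
      by_contra h; push_neg at h; exact hx (funext fun s => h s)
    have hxpos : 0 < A.eff x s₁ := (A.nonneg x s₁).lt_of_ne (Ne.symm hs₁)
    have hcy : A.eff x s₁ = c * A.eff y s₁ := by
      have := congrFun hc s₁; simpa using this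
    have hcpos : 0 < c := by
      rcases lt_or_ge 0 c with h | h
      · exact h
      · exfalso
        have hyn : 0 ≤ A.eff y s₁ := A.nonneg y s₁
        nlinarith
    have h1c : (0:ℝ) < 1 + c := by linarith
    -- the total effect at each point, expressed via `hc`
    have hcpt : ∀ s, A.eff x s = c * A.eff y s := by
      intro s; have := congrFun hc s; simpa using this
    -- the merged observable
    set eff' : Fin A.n → S → ℝ :=
      fun z => if z = x then (0 : S → ℝ) else if z = y then A.eff x + A.eff y
        else A.eff z with heff'
    have heffx : eff' x = 0 := by simp [heff']
    have heffy : eff' y = A.eff x + A.eff y := by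
      simp [heff', Ne.symm hxy]
    have heffz : ∀ z, z ≠ x → z ≠ y → eff' z = A.eff z := by
      intro z h1 h2; simp [heff', h1, h2]
    have Bnormalized : ∀ s, ∑ z, eff' z s = 1 := by
      intro s
      rw [sum_split hxy]
      have hrest : ∑ z ∈ (Finset.univ.erase x).erase y, eff' z s
          = ∑ z ∈ (Finset.univ.erase x).erase y, A.eff z s := by
        refine Finset.sum_congr rfl fun z hz => ?_
        obtain ⟨hzy, hz'⟩ := Finset.mem_erase.mp hz
        obtain ⟨hzx, _⟩ := Finset.mem_erase.mp hz'
        rw [heffz z hzx hzy]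
      rw [hrest, heffx, heffy]
      have hn := A.normalized s
      rw [sum_split hxy] at hn
      simp only [Pi.zero_apply, Pi.add_apply]
      linarith
    set B : Obs S :=
      { n := A.n
        eff := eff'
        affine := by
          intro z
          by_cases h1 : z = x
          · rw [h1, heffx]; intro s₁ s₂ p _ _ h; simp
          by_cases h2 : z = y
          · rw [h2, heffy]
            intro s₁' s₂' p hp0 hp1 h
            have ha := A.affine x s₁' s₂' p hp0 hp1 h
            have hb := A.affine y s₁' s₂' p hp0 hp1 h
            simp only [Pi.add_apply, ha, hb]
            ring
          · rw [heffz z h1 h2]; exact A.affine z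
        nonneg := by
          intro z s
          by_cases h1 : z = x
          · rw [h1, heffx]; simp
          by_cases h2 : z = y
          · rw [h2, heffy]
            exact add_nonneg (A.nonneg x s) (A.nonneg y s)
          · rw [heffz z h1 h2]; exact A.nonneg z s
        normalized := Bnormalized } with hB
    have hBeff : B.eff = eff' := rfl
    have hBn : B.n = A.n := rfl
    -- A → B
    have hAB : Postprocess A B := by
      refine ⟨fun z w => if z = x then (if w = y then 1 else 0)
        else (if w = z then 1 else 0), ?_, ?_, ?_⟩
      · intro z w; dsimp only; split_ifs <;> norm_num
      · intro z; by_cases h1 : z = x <;> simp [h1]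
      · intro w s
        by_cases hw1 : w = x
        · rw [hw1]
          rw [hBeff, heffx]
          symm
          refine Finset.sum_eq_zero fun z _ => ?_
          by_cases h1 : z = x
          · simp [h1, hxy]
          · simp [h1, Ne.symm h1]
        by_cases hw2 : w = y
        · rw [hw2]
          rw [hBeff, heffy, sum_split hxy]
          have hrest : ∑ z ∈ (Finset.univ.erase x).erase y,
              (if z = x then (if y = y then (1:ℝ) else 0) else (if y = z then 1 else 0))
                * A.eff z s = 0 := by
            refine Finset.sum_eq_zero fun z hz => ?_
            obtain ⟨hzy, hz'⟩ := Finset.mem_erase.mp hz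
            obtain ⟨hzx, _⟩ := Finset.mem_erase.mp hz'
            simp [hzx, Ne.symm hzy]
          rw [hrest]
          simp [Ne.symm hxy]
        · rw [hBeff, heffz w hw1 hw2, sum_split hxy]
          have hrest : ∑ z ∈ (Finset.univ.erase x).erase y,
              (if z = x then (if w = y then (1:ℝ) else 0) else (if w = z then 1 else 0))
                * A.eff z s = A.eff w s := by
            rw [Finset.sum_eq_single_of_mem w
              (Finset.mem_erase.mpr ⟨hw2, Finset.mem_erase.mpr ⟨hw1, Finset.mem_univ w⟩⟩)]
            · simp [hw1]
            · intro b hb hbw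
              obtain ⟨hby, hb'⟩ := Finset.mem_erase.mp hb
              obtain ⟨hbx, _⟩ := Finset.mem_erase.mp hb'
              simp [hbx, Ne.symm hbw]
          rw [hrest]
          simp [hw1, hw2, Ne.symm hxy]
    -- B → A
    have hBA : Postprocess B A := by
      refine ⟨fun w z => if w = x then (if z = x then 1 else 0)
        else if w = y then (if z = x then c/(1+c) else if z = y then 1/(1+c) else 0)
        else (if z = w then 1 else 0), ?_, ?_, ?_⟩
      · intro w z; dsimp only; split_ifs <;> positivity
      · intro w
        by_cases h1 : w = x
        · simp [h1]
        by_cases h2 : w = y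
        · rw [h2]
          rw [sum_split hxy]
          have hrest : ∑ z ∈ (Finset.univ.erase x).erase y,
              (if y = x then (if z = x then (1:ℝ) else 0)
                else if y = y then (if z = x then c/(1+c) else if z = y then 1/(1+c) else 0)
                else (if z = y then 1 else 0)) = 0 := by
            refine Finset.sum_eq_zero fun z hz => ?_
            obtain ⟨hzy, hz'⟩ := Finset.mem_erase.mp hz
            obtain ⟨hzx, _⟩ := Finset.mem_erase.mp hz'
            simp [Ne.symm hxy, hzx, hzy]
          rw [hrest]
          have hne : y ≠ x := Ne.symm hxy
          simp only [if_neg hne, eq_self_iff_true, if_true, if_neg hxy, add_zero]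
          field_simp
          ring
        · simp [h1, h2]
      · intro z s
        rw [sum_split hxy, hBeff, heffx, heffy]
        have hBy : (A.eff x + A.eff y) s = (1 + c) * A.eff y s := by
          simp only [Pi.add_apply]; rw [hcpt s]; ring
        by_cases hz1 : z = x
        · rw [hz1]
          have hrest : ∑ w ∈ (Finset.univ.erase x).erase y,
              (if w = x then (if x = x then (1:ℝ) else 0)
                else if w = y then (if x = x then c/(1+c) else if x = y then 1/(1+c) else 0)
                else (if x = w then 1 else 0)) * eff' w s = 0 := by
            refine Finset.sum_eq_zero fun w hw => ?_
            obtain ⟨hwy, hw'⟩ := Finset.mem_erase.mp hw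
            obtain ⟨hwx, _⟩ := Finset.mem_erase.mp hw'
            simp [hwx, hwy, Ne.symm hwx]
          rw [hrest]
          have hne : y ≠ x := Ne.symm hxy
          simp only [if_neg hne, if_neg hxy, eq_self_iff_true, if_true, Pi.zero_apply,
            Pi.add_apply, mul_zero, zero_add, add_zero]
          rw [hcpt s]
          field_simp
          ring
        by_cases hz2 : z = y
        · rw [hz2]
          have hrest : ∑ w ∈ (Finset.univ.erase x).erase y,
              (if w = x then (if y = x then (1:ℝ) else 0)
                else if w = y then (if y = x then c/(1+c) else if y = y then 1/(1+c) else 0)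
                else (if y = w then 1 else 0)) * eff' w s = 0 := by
            refine Finset.sum_eq_zero fun w hw => ?_
            obtain ⟨hwy, hw'⟩ := Finset.mem_erase.mp hw
            obtain ⟨hwx, _⟩ := Finset.mem_erase.mp hw'
            simp [hwx, hwy, Ne.symm hwy]
          rw [hrest]
          have hne : y ≠ x := Ne.symm hxy
          simp only [if_neg hne, if_neg hxy, eq_self_iff_true, if_true, Pi.zero_apply,
            Pi.add_apply, mul_zero, zero_add, add_zero]
          rw [hcpt s]
          field_simp
          ring
        · have hrest : ∑ w ∈ (Finset.univ.erase x).erase y,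
              (if w = x then (if z = x then (1:ℝ) else 0)
                else if w = y then (if z = x then c/(1+c) else if z = y then 1/(1+c) else 0)
                else (if z = w then 1 else 0)) * eff' w s = A.eff z s := by
            rw [Finset.sum_eq_single_of_mem z
              (Finset.mem_erase.mpr ⟨hz2, Finset.mem_erase.mpr ⟨hz1, Finset.mem_univ z⟩⟩)]
            · rw [heffz z hz1 hz2]; simp [hz1, hz2]
            · intro b hb hbz
              obtain ⟨hby, hb'⟩ := Finset.mem_erase.mp hb
              obtain ⟨hbx, _⟩ := Finset.mem_erase.mp hb'
              simp [hbx, hby, Ne.symm hbz]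
          rw [hrest]
          have hne : y ≠ x := Ne.symm hxy
          simp [hz1, hz2, hne]
    -- strictly fewer nonzero effects
    have hcard : (Finset.univ.filter fun z => B.eff z ≠ 0).card ≤ k := by
      have hss : (Finset.univ.filter fun z => B.eff z ≠ 0)
          ⊂ (Finset.univ.filter fun z => A.eff z ≠ 0) := by
        constructor
        · intro z hz
          obtain ⟨_, hz⟩ := Finset.mem_filter.mp hz
          refine Finset.mem_filter.mpr ⟨Finset.mem_univ z, ?_⟩
          rw [hBeff] at hz
          by_cases h1 : z = x
          · rw [h1, heffx] at hz; exact absurd rfl hz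
          by_cases h2 : z = y
          · rw [h2]; exact hy
          · rwa [heffz z h1 h2] at hz
        · intro hsub
          have hxA : x ∈ Finset.univ.filter fun z => A.eff z ≠ 0 :=
            Finset.mem_filter.mpr ⟨Finset.mem_univ x, hx⟩
          have hxB := hsub hxA
          obtain ⟨_, hxB⟩ := Finset.mem_filter.mp hxB
          rw [hBeff, heffx] at hxB
          exact hxB rfl
      exact Nat.lt_succ_iff.mp (lt_of_lt_of_le (Finset.card_lt_card hss) hA)
    obtain ⟨Ahat, ⟨hBAhat, hAhatB⟩, hprop⟩ := ih B hcard
    exact ⟨Ahat, ⟨pp_trans hAB hBAhat, pp_trans hAhatB hBA⟩, hprop⟩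
end

section
/- Let N be a set of observables on a state space S that is convex and closed under postprocessing. If an observable A is simulated by observables B^(1),…,B^(m), i.e., A_y = ∑_{i,x} p_i ν_{(i,x)y} B^(i)_x for a probability distribution (p_i) and a stochastic matrix ν, then the noise content of A with respect to N is at least the minimum of the noise contents of the simulators: w(A; N) ≥ min_{1≤i≤m} w(B^(i); N). -/
open scoped BigOperators

variable {V : Type*} [NormedAddCommGroup V] [NormedSpace ℝ V] {S : Set V}

/-- The effect of `A` at outcome `y ∈ ℕ`, extended by the zero effect outside the
outcome set of `A` (this realizes mixtures on a common outcome set). -/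
def extEff (A : Obs S) (y : ℕ) (s : S) : ℝ :=
  if h : y < A.n then A.eff ⟨y, h⟩ s else 0

/-- `A = lam • N + (1 - lam) • B`, the mixture taken on a common outcome set by
extending all observables with zero effects. -/
def IsMixture (lam : ℝ) (N B A : Obs S) : Prop :=
  ∀ (y : ℕ) (s : S), extEff A y s = lam * extEff N y s + (1 - lam) * extEff B y s

/-- The noise content `w(A; 𝓝)` of `A` with respect to a set `𝓝` of noisy
observables. -/
noncomputable def noiseContent (𝓝 : Set (Obs S)) (A : Obs S) : ℝ :=
  sSup {lam : ℝ | 0 ≤ lam ∧ lam ≤ 1 ∧ ∃ N ∈ 𝓝, ∃ B : Obs S, IsMixture lam N B A}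

/-!
Pick `μ` below every `w(B⁽ⁱ⁾; 𝓝)`, so that `B⁽ⁱ⁾ = μ N⁽ⁱ⁾ + (1 - μ) C⁽ⁱ⁾` with `N⁽ⁱ⁾ ∈ 𝓝`.
Simulation is affine in the simulators, hence running the simulation of `A` on the `N⁽ⁱ⁾` and on
the `C⁽ⁱ⁾` writes `A = μ N + (1 - μ) C`; here `N` is a mixture of postprocessings of members
of `𝓝`, so it lies in `𝓝`. Thus `μ ≤ w(A; 𝓝)`.
-/

open Finset

lemma affineOn_sum {ι : Type*} (t : Finset ι) (c : ι → ℝ) (f : ι → S → ℝ)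
    (hf : ∀ i ∈ t, AffineOn S (f i)) : AffineOn S (fun s => ∑ i ∈ t, c i * f i s) := by
  intro s₁ s₂ p hp0 hp1 h
  simp only [mul_sum, ← sum_add_distrib]
  refine sum_congr rfl fun i hi => ?_
  rw [hf i hi s₁ s₂ p hp0 hp1 h]
  ring

lemma Obs.n_pos (hS : S.Nonempty) (A : Obs S) : 0 < A.n := by
  obtain ⟨v, hv⟩ := hS
  by_contra! h
  have := A.normalized ⟨v, hv⟩
  rw [Fintype.sum_eq_zero _ fun x => absurd x.isLt (by omega)] at this
  exact zero_ne_one this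

lemma extEff_affineOn (A : Obs S) (y : ℕ) : AffineOn S (extEff A y) := by
  intro s₁ s₂ p hp0 hp1 h
  unfold extEff
  split
  · exact A.affine _ s₁ s₂ p hp0 hp1 h
  · ring

lemma extEff_nonneg (A : Obs S) (y : ℕ) (s : S) : 0 ≤ extEff A y s := by
  unfold extEff
  split
  · exact A.nonneg _ s
  · exact le_rfl

lemma extEff_of_le (A : Obs S) {y : ℕ} (h : A.n ≤ y) (s : S) : extEff A y s = 0 :=
  dif_neg (by omega)

lemma extEff_val (A : Obs S) (x : Fin A.n) (s : S) : extEff A x s = A.eff x s :=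
  dif_pos x.isLt

lemma sum_range_extEff (A : Obs S) {n : ℕ} (h : A.n ≤ n) (s : S) :
    ∑ y ∈ range n, extEff A y s = 1 := by
  rw [eventually_constant_sum (fun y hy => extEff_of_le A hy s) h,
    ← Fin.sum_univ_eq_sum_range (fun y => extEff A y s)]
  simp only [extEff_val, A.normalized]

noncomputable def Obs.mix {ι : Type*} [Fintype ι] (n₀ : ℕ) (c : ι → ℝ) (F : ι → Obs S)
    (hc : ∀ i, 0 ≤ c i) (hc1 : ∑ i, c i = 1) (hn : ∀ i, (F i).n ≤ n₀) : Obs S where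
  n := n₀
  eff y s := ∑ i, c i * extEff (F i) y s
  affine _ := affineOn_sum _ _ _ fun i _ => extEff_affineOn _ _
  nonneg _ s := sum_nonneg fun i _ => mul_nonneg (hc i) (extEff_nonneg _ _ _)
  normalized s := by
    have hF : ∀ i, ∑ y : Fin n₀, c i * extEff (F i) y s = c i := fun i => by
      rw [← mul_sum, Fin.sum_univ_eq_sum_range (fun y => extEff (F i) y s),
        sum_range_extEff _ (hn i), mul_one]
    rw [sum_comm]
    simp only [hF, hc1]

lemma extEff_mix {ι : Type*} [Fintype ι] (n₀ : ℕ) (c : ι → ℝ) (F : ι → Obs S)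
    (hc : ∀ i, 0 ≤ c i) (hc1 : ∑ i, c i = 1) (hn : ∀ i, (F i).n ≤ n₀) (y : ℕ) (s : S) :
    extEff (Obs.mix n₀ c F hc hc1 hn) y s = ∑ i, c i * extEff (F i) y s := by
  by_cases hy : y < n₀
  · exact dif_pos hy
  · rw [extEff_of_le _ (not_lt.mp hy)]
    exact (Fintype.sum_eq_zero _ fun i => by
      rw [extEff_of_le _ ((hn i).trans (not_lt.mp hy)), mul_zero]).symm

noncomputable def Obs.postprocess (N : Obs S) {n : ℕ} (ν : Fin N.n → Fin n → ℝ)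
    (hν : ∀ x y, 0 ≤ ν x y) (hν1 : ∀ x, ∑ y, ν x y = 1) : Obs S where
  n := n
  eff y s := ∑ x, ν x y * N.eff x s
  affine _ := affineOn_sum _ _ _ fun x _ => N.affine x
  nonneg y s := sum_nonneg fun x _ => mul_nonneg (hν x y) (N.nonneg x s)
  normalized s := by
    rw [sum_comm]
    simp_rw [← sum_mul, hν1, one_mul, N.normalized]

lemma Obs.postprocess_n (N : Obs S) {n : ℕ} (ν : Fin N.n → Fin n → ℝ)
    (hν : ∀ x y, 0 ≤ ν x y) (hν1 : ∀ x, ∑ y, ν x y = 1) : (N.postprocess ν hν hν1).n = n :=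
  rfl

lemma Obs.postprocess_eff (N : Obs S) {n : ℕ} (ν : Fin N.n → Fin n → ℝ)
    (hν : ∀ x y, 0 ≤ ν x y) (hν1 : ∀ x, ∑ y, ν x y = 1) (y : Fin n) (s : S) :
    (N.postprocess ν hν hν1).eff y s = ∑ x, ν x y * N.eff x s :=
  rfl

lemma Postprocess.postprocess (N : Obs S) {n : ℕ} (ν : Fin N.n → Fin n → ℝ)
    (hν : ∀ x y, 0 ≤ ν x y) (hν1 : ∀ x, ∑ y, ν x y = 1) :
    Postprocess N (N.postprocess ν hν hν1) :=
  ⟨ν, hν, hν1, fun _ _ => rfl⟩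

section ExtendRows

variable {k n : ℕ} (ν : Fin k → Fin n → ℝ) (y₀ : Fin n)

/-- Any stochastic rows beyond `k` would do: they only ever meet vanishing effects. -/
noncomputable def extendRows (r : ℕ) : Fin r → Fin n → ℝ :=
  fun x => if h : (x : ℕ) < k then ν ⟨x, h⟩ else Pi.single y₀ 1

variable {ν}

lemma extendRows_nonneg (hν : ∀ x y, 0 ≤ ν x y) (r : ℕ) (x : Fin r) (y : Fin n) :
    0 ≤ extendRows ν y₀ r x y := by
  unfold extendRows
  split
  · exact hν _ _
  · rw [Pi.single_apply]
    split_ifs <;> norm_num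

lemma sum_extendRows (hν1 : ∀ x, ∑ y, ν x y = 1) (r : ℕ) (x : Fin r) :
    ∑ y, extendRows ν y₀ r x y = 1 := by
  unfold extendRows
  split
  · exact hν1 _
  · simp

lemma sum_extendRows_mul_eff (N : Obs S) (hN : ∀ x, k ≤ x → ∀ s, extEff N x s = 0)
    (y : Fin n) (s : S) :
    ∑ x, extendRows ν y₀ N.n x y * N.eff x s = ∑ x : Fin k, ν x y * extEff N x s := by
  set G : ℕ → ℝ := fun x => (if h : x < k then ν ⟨x, h⟩ y else 0) * extEff N x s
  have hG : ∀ x ≥ min k N.n, G x = 0 := by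
    intro x hx
    rcases min_le_iff.mp hx with hk | hn
    · simp only [G, dif_neg (not_lt.mpr hk), zero_mul]
    · simp only [G, extEff_of_le N hn, mul_zero]
  calc ∑ x, extendRows ν y₀ N.n x y * N.eff x s
      = ∑ x : Fin N.n, G x := by
        refine sum_congr rfl fun x _ => ?_
        simp only [G, extendRows, extEff_val]
        split
        · rfl
        · rw [← extEff_val, hN x (by omega), mul_zero, mul_zero]
    _ = ∑ x : Fin k, G x := by
        rw [Fin.sum_univ_eq_sum_range G, Fin.sum_univ_eq_sum_range G,
          eventually_constant_sum hG (min_le_right _ _),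
          eventually_constant_sum hG (min_le_left _ _)]
    _ = ∑ x : Fin k, ν x y * extEff N x s :=
        sum_congr rfl fun x _ => by simp only [G, dif_pos x.isLt]

end ExtendRows

def PostprocessClosed (𝓝 : Set (Obs S)) : Prop :=
  ∀ A ∈ 𝓝, ∀ B : Obs S, Postprocess A B → B ∈ 𝓝

def MixtureClosed (𝓝 : Set (Obs S)) : Prop :=
  ∀ N₁ ∈ 𝓝, ∀ N₂ ∈ 𝓝, ∀ lam : ℝ, 0 ≤ lam → lam ≤ 1 →
    ∀ M : Obs S, IsMixture lam N₁ N₂ M → M ∈ 𝓝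

lemma MixtureClosed.mem_of_extEff_eq_sum {𝓝 : Set (Obs S)} (h𝓝 : MixtureClosed 𝓝) {r : ℕ}
    (q : Fin r → ℝ) (hq : ∀ i, 0 ≤ q i) (hq1 : ∑ i, q i = 1) (M : Fin r → Obs S)
    (hM : ∀ i, M i ∈ 𝓝) (M₀ : Obs S)
    (hM₀ : ∀ y s, extEff M₀ y s = ∑ i, q i * extEff (M i) y s) : M₀ ∈ 𝓝 := by
  induction r generalizing M₀ with
  | zero => simp at hq1
  | succ r ih =>
    rw [Fin.sum_univ_succ] at hq1
    have hq0 : q 0 ≤ 1 := by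
      linarith [show 0 ≤ ∑ i : Fin r, q i.succ from sum_nonneg fun i _ => hq i.succ]
    rcases hq0.eq_or_lt with hq0 | hq0
    · have htail : ∀ i : Fin r, q i.succ = 0 := fun i =>
        (sum_eq_zero_iff_of_nonneg fun i _ => hq i.succ).mp (by linarith) i (mem_univ i)
      refine h𝓝 _ (hM 0) _ (hM 0) 1 zero_le_one le_rfl M₀ fun y s => ?_
      simp [hM₀ y s, Fin.sum_univ_succ, htail, hq0]
    · set q' : Fin r → ℝ := fun i => q i.succ / (1 - q 0)
      have hq'0 : ∀ i, 0 ≤ q' i := fun _ => div_nonneg (hq _) (by linarith)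
      have hq'1 : ∑ i, q' i = 1 := by
        rw [← sum_div, div_eq_one_iff_eq (by linarith)]
        linarith
      set M' := Obs.mix (univ.sup fun i : Fin r => (M i.succ).n) q' (fun i => M i.succ)
        hq'0 hq'1 (fun i => le_sup (f := fun i => (M i.succ).n) (mem_univ i))
      have hM' : M' ∈ 𝓝 := ih q' hq'0 hq'1 _ (fun i => hM i.succ) M' fun _ _ => extEff_mix ..
      refine h𝓝 _ (hM 0) _ hM' (q 0) (hq 0) hq0.le M₀ fun y s => ?_
      rw [hM₀ y s, Fin.sum_univ_succ, extEff_mix, mul_sum]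
      congr 1
      refine sum_congr rfl fun i _ => ?_
      rw [← mul_assoc, mul_div_cancel₀ _ (by linarith)]

section NoiseWeights

variable (𝓝 : Set (Obs S)) (A : Obs S)

/-- `noiseContent 𝓝 A` is the supremum of this set. -/
def noiseWeights : Set ℝ :=
  {lam : ℝ | 0 ≤ lam ∧ lam ≤ 1 ∧ ∃ N ∈ 𝓝, ∃ B : Obs S, IsMixture lam N B A}

variable {𝓝 A}

lemma mem_noiseWeights_of_le {lam μ : ℝ} (h : lam ∈ noiseWeights 𝓝 A) (hμ0 : 0 ≤ μ)
    (hμlam : μ ≤ lam) (hμ1 : μ < 1) : μ ∈ noiseWeights 𝓝 A := by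
  obtain ⟨-, hlam1, N, hN, C, hmix⟩ := h
  refine ⟨hμ0, hμ1.le, N, hN, ?_⟩
  have hμ1' : 1 - μ ≠ 0 := sub_ne_zero.mpr hμ1.ne'
  -- `λ N + (1 - λ) C = μ N + (1 - μ) C'` for `C'` the following mixture of `N` and `C`
  have hc : ∀ i, 0 ≤ ![(lam - μ) / (1 - μ), (1 - lam) / (1 - μ)] i := by
    intro i
    fin_cases i <;> exact div_nonneg (by simp; linarith) (by linarith)
  have hc1 : ∑ i, ![(lam - μ) / (1 - μ), (1 - lam) / (1 - μ)] i = 1 := by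
    simp only [Fin.sum_univ_two, Matrix.cons_val_zero, Matrix.cons_val_one]
    rw [← add_div, div_eq_one_iff_eq hμ1']
    ring
  refine ⟨Obs.mix (max N.n C.n) _ ![N, C] hc hc1 fun i => ?_, fun y s => ?_⟩
  · fin_cases i <;> simp
  · rw [hmix y s, extEff_mix, Fin.sum_univ_two]
    simp only [Matrix.cons_val_zero, Matrix.cons_val_one]
    field_simp
    ring

lemma mem_noiseWeights_of_lt_noiseContent {μ : ℝ} (hμ0 : 0 ≤ μ)
    (hμ : μ < noiseContent 𝓝 A) : μ ∈ noiseWeights 𝓝 A := by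
  have hne : (noiseWeights 𝓝 A).Nonempty := by
    by_contra h
    rw [noiseContent, ← noiseWeights, Set.not_nonempty_iff_eq_empty.mp h,
      Real.sSup_empty] at hμ
    linarith
  obtain ⟨lam, hlam, hμlam⟩ := exists_lt_of_lt_csSup hne hμ
  exact mem_noiseWeights_of_le hlam hμ0 hμlam.le (hμlam.trans_le hlam.2.1)

lemma le_noiseContent_of_mem {μ : ℝ} (hμ : μ ∈ noiseWeights 𝓝 A) : μ ≤ noiseContent 𝓝 A :=
  le_csSup ⟨1, fun _ h => h.2.1⟩ hμ

lemma noiseContent_nonneg : 0 ≤ noiseContent 𝓝 A :=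
  Real.sSup_nonneg fun _ h => h.1

lemma noiseContent_le_one : noiseContent 𝓝 A ≤ 1 :=
  Real.sSup_le (fun _ h => h.2.1) zero_le_one

end NoiseWeights

lemma IsMixture.extEff_eq_zero {μ : ℝ} {N C B : Obs S} (h : IsMixture μ N C B) (hμ0 : 0 < μ)
    (hμ1 : μ < 1) {x : ℕ} (hx : B.n ≤ x) (s : S) : extEff N x s = 0 ∧ extEff C x s = 0 := by
  have hsum := h x s
  rw [extEff_of_le B hx] at hsum
  have hN := mul_nonneg hμ0.le (extEff_nonneg N x s)
  have hC := mul_nonneg (sub_nonneg.mpr hμ1.le) (extEff_nonneg C x s)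
  exact ⟨(mul_eq_zero.mp (by linarith)).resolve_left hμ0.ne',
    (mul_eq_zero.mp (by linarith)).resolve_left (sub_ne_zero.mpr hμ1.ne')⟩

lemma isMixture_of_forall_lt {μ : ℝ} {N C A : Obs S} (hN : N.n ≤ A.n) (hC : C.n ≤ A.n)
    (h : ∀ y < A.n, ∀ s, extEff A y s = μ * extEff N y s + (1 - μ) * extEff C y s) :
    IsMixture μ N C A := by
  intro y s
  by_cases hy : y < A.n
  · exact h y hy s
  · have hy := not_lt.mp hy
    rw [extEff_of_le A hy, extEff_of_le N (hN.trans hy), extEff_of_le C (hC.trans hy)]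
    ring

section Simulation

variable {m k n : ℕ} (F : Fin m → Obs S) (p : Fin m → ℝ) (ν : Fin m → Fin k → Fin n → ℝ)
  (y₀ : Fin n) (hp : ∀ i, 0 ≤ p i) (hp1 : ∑ i, p i = 1) (hν : ∀ i x y, 0 ≤ ν i x y)
  (hν1 : ∀ i x, ∑ y, ν i x y = 1)

/-- The simulation `∑ᵢ pᵢ νᵢ ∘ Fᵢ`, for simulators `Fᵢ` whose effects beyond `k` vanish. -/
noncomputable def Obs.simulate : Obs S :=
  Obs.mix n p (fun i => (F i).postprocess (extendRows (ν i) y₀ (F i).n)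
    (extendRows_nonneg y₀ (hν i) _) (sum_extendRows y₀ (hν1 i) _)) hp hp1
    fun _ => (Obs.postprocess_n ..).le

lemma Obs.simulate_mem {𝓝 : Set (Obs S)} (hpost : PostprocessClosed 𝓝)
    (hconv : MixtureClosed 𝓝) (hF : ∀ i, F i ∈ 𝓝) :
    Obs.simulate F p ν y₀ hp hp1 hν hν1 ∈ 𝓝 :=
  hconv.mem_of_extEff_eq_sum p hp hp1 _
    (fun i => hpost _ (hF i) _ (Postprocess.postprocess ..)) _ fun _ _ => extEff_mix ..

lemma extEff_simulate (hF : ∀ i x, k ≤ x → ∀ s, extEff (F i) x s = 0) (y : Fin n) (s : S) :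
    extEff (Obs.simulate F p ν y₀ hp hp1 hν hν1) y s =
      ∑ i, ∑ x : Fin k, p i * ν i x y * extEff (F i) x s := by
  rw [Obs.simulate, extEff_mix]
  refine sum_congr rfl fun i _ => ?_
  rw [extEff_val (Obs.postprocess ..) y, Obs.postprocess_eff,
    sum_extendRows_mul_eff y₀ (F i) (hF i), mul_sum]
  simp only [mul_assoc]

end Simulation

theorem mem_noiseWeights_of_simulation (hS : S.Nonempty) {𝓝 : Set (Obs S)}
    (hpost : PostprocessClosed 𝓝) (hconv : MixtureClosed 𝓝) (A : Obs S) {m k : ℕ}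
    (B : Fin m → Obs S) (hk : ∀ i, (B i).n = k) (p : Fin m → ℝ)
    (ν : Fin m → Fin k → Fin A.n → ℝ) (hp : ∀ i, 0 ≤ p i) (hp1 : ∑ i, p i = 1)
    (hν : ∀ i x y, 0 ≤ ν i x y) (hν1 : ∀ i x, ∑ y, ν i x y = 1)
    (hsim : ∀ y s,
      A.eff y s = ∑ i, ∑ x, p i * ν i x y * (B i).eff (Fin.cast (hk i).symm x) s)
    {μ : ℝ} (hμ0 : 0 < μ) (hμ1 : μ < 1) (hμ : ∀ i, μ ∈ noiseWeights 𝓝 (B i)) :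
    μ ∈ noiseWeights 𝓝 A := by
  choose N hN C hmix using fun i => (hμ i).2.2
  have hvanish i x (hx : k ≤ x) s := (hmix i).extEff_eq_zero hμ0 hμ1 ((hk i).trans_le hx) s
  let y₀ : Fin A.n := ⟨0, A.n_pos hS⟩
  refine ⟨hμ0.le, hμ1.le, _, Obs.simulate_mem N p ν y₀ hp hp1 hν hν1 hpost hconv hN,
    Obs.simulate C p ν y₀ hp hp1 hν hν1, isMixture_of_forall_lt le_rfl le_rfl fun y hy s => ?_⟩
  have hB i (x : Fin k) : (B i).eff (Fin.cast (hk i).symm x) s =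
      μ * extEff (N i) x s + (1 - μ) * extEff (C i) x s := by
    rw [← extEff_val]
    exact hmix i x s
  rw [show y = (⟨y, hy⟩ : Fin A.n) from rfl, extEff_val, hsim,
    extEff_simulate N p ν y₀ hp hp1 hν hν1 fun i x hx s => (hvanish i x hx s).1,
    extEff_simulate C p ν y₀ hp hp1 hν hν1 fun i x hx s => (hvanish i x hx s).2]
  simp only [hB, mul_sum, ← sum_add_distrib]
  exact sum_congr rfl fun i _ => sum_congr rfl fun x _ => by ring

theorem statement7_general {V : Type*} [NormedAddCommGroup V] [NormedSpace ℝ V] {S : Set V}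
    (hSne : S.Nonempty) (𝓝 : Set (Obs S))
    (hpost : ∀ A ∈ 𝓝, ∀ B : Obs S, Postprocess A B → B ∈ 𝓝)
    (hconv : ∀ N₁ ∈ 𝓝, ∀ N₂ ∈ 𝓝, ∀ lam : ℝ, 0 ≤ lam → lam ≤ 1 →
      ∀ M : Obs S, IsMixture lam N₁ N₂ M → M ∈ 𝓝)
    (A : Obs S) (m k : ℕ) (hm : 0 < m) (B : Fin m → Obs S)
    (hk : ∀ i, (B i).n = k) (p : Fin m → ℝ) (ν : Fin m → Fin k → Fin A.n → ℝ)
    (hp : ∀ i, 0 ≤ p i) (hp1 : ∑ i, p i = 1)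
    (hν : ∀ i x y, 0 ≤ ν i x y) (hν1 : ∀ i x, ∑ y, ν i x y = 1)
    (hsim : ∀ y s,
      A.eff y s = ∑ i, ∑ x, p i * ν i x y * (B i).eff (Fin.cast (hk i).symm x) s) :
    (Finset.univ.inf' (Finset.univ_nonempty_iff.mpr ⟨⟨0, hm⟩⟩)
        fun i => noiseContent 𝓝 (B i)) ≤ noiseContent 𝓝 A := by
  refine le_of_forall_lt_imp_le_of_dense fun μ hμ => ?_
  rcases le_or_gt μ 0 with hμ0 | hμ0
  · exact hμ0.trans noiseContent_nonneg
  have hμB i : μ < noiseContent 𝓝 (B i) := hμ.trans_le (inf'_le _ (mem_univ i))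
  refine le_noiseContent_of_mem <| mem_noiseWeights_of_simulation hSne hpost hconv A B hk p ν
    hp hp1 hν hν1 hsim hμ0 ((hμB ⟨0, hm⟩).trans_le noiseContent_le_one) fun i => ?_
  exact mem_noiseWeights_of_lt_noiseContent hμ0.le (hμB i)

/-- if `𝓝` is convex and closed under postprocessing, the noise content
of a simulated observable is at least the minimum of the noise contents of its
simulators. -/
theorem statement7 {V : Type*} [NormedAddCommGroup V] [NormedSpace ℝ V]
    [FiniteDimensional ℝ V] {S : Set V}
    (hScomp : IsCompact S) (hSconv : Convex ℝ S) (hSne : S.Nonempty)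
    (𝓝 : Set (Obs S))
    (hpost : ∀ A ∈ 𝓝, ∀ B : Obs S, Postprocess A B → B ∈ 𝓝)
    (hconv : ∀ N₁ ∈ 𝓝, ∀ N₂ ∈ 𝓝, ∀ lam : ℝ, 0 ≤ lam → lam ≤ 1 →
      ∀ M : Obs S, IsMixture lam N₁ N₂ M → M ∈ 𝓝)
    (A : Obs S) (m k : ℕ) (hm : 0 < m) (B : Fin m → Obs S)
    (hk : ∀ i, (B i).n = k) (p : Fin m → ℝ) (ν : Fin m → Fin k → Fin A.n → ℝ)
    (hp : ∀ i, 0 ≤ p i) (hp1 : ∑ i, p i = 1)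
    (hν : ∀ i x y, 0 ≤ ν i x y) (hν1 : ∀ i x, ∑ y, ν i x y = 1)
    (hsim : ∀ y s,
      A.eff y s = ∑ i, ∑ x, p i * ν i x y * (B i).eff (Fin.cast (hk i).symm x) s) :
    (Finset.univ.inf' (Finset.univ_nonempty_iff.mpr ⟨⟨0, hm⟩⟩)
        fun i => noiseContent 𝓝 (B i)) ≤ noiseContent 𝓝 A :=
  statement7_general hSne 𝓝 hpost hconv A m k hm B hk p ν hp hp1 hν hν1 hsim
end

section
/- Let A^(1),…,A^(n) be POVMs on ℂ^d with finite outcome sets Ω_1,…,Ω_n. If there exist k POVMs B^(1),…,B^(k) on ℂ^d with a common finite outcome set Ω such that each A^(i) is simulable from {B^(1),…,B^(k)} (i.e., for each i there is a probability distribution (p^(i)_j)_{j=1}^k and a stochastic matrix ν^(i) with A^(i)(y) = ∑_{j=1}^k ∑_{x∈Ω} p^(i)_j ν^(i)_{(j,x)y} B^(j)(x) for all y ∈ Ω_i), then A^(1),…,A^(n) are k-compatible: there exists a POVM G on the k-fold tensor power (ℂ^d)^{⊗k} with finite outcome set Ω₀ and, for each i, a stochastic matrix μ^(i) from Ω₀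 to Ω_i such that ∑_{z∈Ω₀} μ^(i)_{z y} Tr[G(z) ρ^{⊗k}] = Tr[A^(i)(y) ρ] for every density matrix ρ on ℂ^d, every y ∈ Ω_i, and every i = 1,…,n. -/
open scoped BigOperators ComplexOrder

/-- A POVM on the Hilbert space with orthonormal basis indexed by `ι`, with finite
outcome set `Ω`: a family of positive semidefinite matrices summing to the identity. -/
structure POVM (ι : Type*) [Fintype ι] [DecidableEq ι] (Ω : Type*) [Fintype Ω] where
  M : Ω → Matrix ι ι ℂ
  posSemidef : ∀ x, (M x).PosSemidef
  sum_eq_one : ∑ x, M x = 1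

/-- The `k`-fold tensor (Kronecker) power of a matrix on `ℂ^d`, a matrix on
`(ℂ^d)^{⊗k}` (whose basis is indexed by `Fin k → Fin d`). -/
def kronPow {d : ℕ} (k : ℕ) (ρ : Matrix (Fin d) (Fin d) ℂ) :
    Matrix (Fin k → Fin d) (Fin k → Fin d) ℂ :=
  Matrix.of fun f g => ∏ j, ρ (f j) (g j)

/-!
The product POVM `B⁽¹⁾ ⊗ ⋯ ⊗ B⁽ᵏ⁾`, with outcomes `f : Fin k → Ω`, measured on `ρ^{⊗k}` yields
`f` with probability `∏ⱼ Tr[B⁽ʲ⁾(f j) ρ]`, i.e. the `k` measurements are performed independently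
on the `k` copies of `ρ`. To simulate `A⁽ⁱ⁾ = ∑ⱼ pⱼ ∑ₓ ν_{(j,x)·} B⁽ʲ⁾(x)` one postprocesses `f`
by the stochastic map `μ⁽ⁱ⁾(f, y) = ∑ⱼ pⱼ ν_{(j, f j) y}`: since the `j`-th marginal of the
product distribution is the distribution of `B⁽ʲ⁾` on `ρ`, the postprocessed statistics are
`∑ⱼ pⱼ ∑ₓ ν_{(j,x) y} Tr[B⁽ʲ⁾(x) ρ] = Tr[A⁽ⁱ⁾(y) ρ]`.
-/

open Matrix

section MarginalSum

variable {ι κ R : Type*} [Fintype ι] [DecidableEq ι] [Fintype κ] [CommSemiring R]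
  (q : ι → κ → R)

theorem Fintype.sum_mul_prod_eq_of_sum_eq_one (hq : ∀ j, ∑ x, q j x = 1) (j : ι) (w : κ → R) :
    ∑ f : ι → κ, w (f j) * ∏ j', q j' (f j') = ∑ x, w x * q j x := by
  -- absorb `w` into the `j`-th factor of the product and expand it back as a product of sums
  have absorb : ∀ f : ι → κ,
      w (f j) * ∏ j', q j' (f j') = ∏ j', (if j' = j then w (f j') else 1) * q j' (f j') := by
    intro f
    rw [Finset.prod_mul_distrib, Finset.prod_ite_eq' Finset.univ j, if_pos (Finset.mem_univ j)]
  have factor : ∀ j', ∑ x, (if j' = j then w x else 1) * q j' x =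
      if j' = j then ∑ x, w x * q j' x else 1 := by
    intro j'
    split_ifs <;> simp [hq]
  simp_rw [absorb]
  rw [← Fintype.prod_sum fun j' x => (if j' = j then w x else 1) * q j' x,
    Finset.prod_congr rfl fun j' _ => factor j', Finset.prod_ite_eq' Finset.univ j,
    if_pos (Finset.mem_univ j)]

theorem Fintype.sum_sum_mul_prod_eq_of_sum_eq_one (hq : ∀ j, ∑ x, q j x = 1) (g : ι → κ → R) :
    ∑ f : ι → κ, (∑ j, g j (f j)) * ∏ j', q j' (f j') = ∑ j, ∑ x, g j x * q j x := by
  simp_rw [Finset.sum_mul]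
  rw [Finset.sum_comm]
  exact Finset.sum_congr rfl fun j _ => sum_mul_prod_eq_of_sum_eq_one q hq j (g j)

end MarginalSum

namespace Matrix

variable {ι κ Ω R : Type*} [Fintype ι]

def piKron [CommMonoid R] (C : ι → Matrix κ κ R) : Matrix (ι → κ) (ι → κ) R :=
  of fun a b => ∏ j, C j (a j) (b j)

theorem kronPow_eq_piKron {d : ℕ} (k : ℕ) (ρ : Matrix (Fin d) (Fin d) ℂ) :
    kronPow k ρ = piKron fun _ => ρ :=
  rfl

theorem conjTranspose_piKron [CommSemiring R] [StarRing R] (C : ι → Matrix κ κ R) :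
    (piKron C)ᴴ = piKron fun j => (C j)ᴴ := by
  ext a b
  simp only [piKron, conjTranspose_apply, of_apply]
  exact star_prod _ _

theorem piKron_one [CommSemiring R] [DecidableEq κ] :
    piKron (fun _ : ι => (1 : Matrix κ κ R)) = 1 := by
  ext a b
  simp only [piKron, of_apply, one_apply, Finset.prod_boole, Finset.mem_univ, true_implies,
    funext_iff]

variable [DecidableEq ι]

theorem sum_piKron [CommSemiring R] [Fintype Ω] (M : ι → Ω → Matrix κ κ R) :
    ∑ f : ι → Ω, piKron (fun j => M j (f j)) = piKron fun j => ∑ x, M j x := by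
  ext a b
  simp only [sum_apply, piKron, of_apply]
  exact (Fintype.prod_sum fun j x => M j x (a j) (b j)).symm

variable [Fintype κ]

theorem piKron_mul [CommSemiring R] (C E : ι → Matrix κ κ R) :
    piKron C * piKron E = piKron fun j => C j * E j := by
  ext a b
  simp only [piKron, mul_apply, of_apply, ← Finset.prod_mul_distrib]
  exact (Fintype.prod_sum fun j x => C j (a j) x * E j x (b j)).symm

theorem trace_piKron [CommSemiring R] (C : ι → Matrix κ κ R) :
    (piKron C).trace = ∏ j, (C j).trace := by
  simp only [trace, diag, piKron, of_apply]
  exact (Fintype.prod_sum fun j x => C j x x).symm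

open scoped MatrixOrder in
theorem PosSemidef.piKron {𝕜 : Type*} [RCLike 𝕜] [DecidableEq κ] {C : ι → Matrix κ κ 𝕜}
    (hC : ∀ j, (C j).PosSemidef) : (piKron C).PosSemidef := by
  choose D hD using fun j => CStarAlgebra.nonneg_iff_eq_star_mul_self.mp (hC j).nonneg
  rw [show C = fun j => (D j)ᴴ * D j from funext hD, ← piKron_mul, ← conjTranspose_piKron]
  exact posSemidef_conjTranspose_mul_self _

end Matrix

namespace POVM

variable {ι κ Ω Ω' : Type*} [Fintype κ] [DecidableEq κ] [Fintype Ω] [Fintype Ω']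

def reindex (e : Ω ≃ Ω') (A : POVM κ Ω) : POVM κ Ω' where
  M := A.M ∘ e.symm
  posSemidef z := A.posSemidef (e.symm z)
  sum_eq_one := by rw [Function.comp_def, e.symm.sum_comp, A.sum_eq_one]

def pi [Fintype ι] [DecidableEq ι] (B : ι → POVM κ Ω) : POVM (ι → κ) (ι → Ω) where
  M f := piKron fun j => (B j).M (f j)
  posSemidef f := PosSemidef.piKron fun j => (B j).posSemidef (f j)
  sum_eq_one := by simp only [sum_piKron, sum_eq_one, piKron_one]

theorem sum_trace_mul (A : POVM κ Ω) {ρ : Matrix κ κ ℂ} (hρ : ρ.trace = 1) :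
    ∑ x, (A.M x * ρ).trace = 1 := by
  rw [← trace_sum, ← Finset.sum_mul, A.sum_eq_one, one_mul, hρ]

theorem trace_pi_mul_kronPow {d k : ℕ} (B : Fin k → POVM (Fin d) Ω) (f : Fin k → Ω)
    (ρ : Matrix (Fin d) (Fin d) ℂ) :
    ((pi B).M f * kronPow k ρ).trace = ∏ j, ((B j).M (f j) * ρ).trace := by
  rw [kronPow_eq_piKron, pi, piKron_mul, trace_piKron]

end POVM

/-- POVMs `A⁽¹⁾,…,A⁽ⁿ⁾` that are simulable from `k` POVMs
`B⁽¹⁾,…,B⁽ᵏ⁾` are `k`-compatible: there are a POVM `G` on the `k`-fold tensor power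
and stochastic postprocessings `μ⁽ⁱ⁾` reproducing the statistics of each `A⁽ⁱ⁾` on
`ρ^{⊗k}` for every density matrix `ρ`. -/
theorem statement11 (d n k : ℕ) (o : Fin n → ℕ) (t : ℕ)
    (A : (i : Fin n) → POVM (Fin d) (Fin (o i)))
    (B : Fin k → POVM (Fin d) (Fin t))
    (hsim : ∀ i : Fin n, ∃ (p : Fin k → ℝ) (ν : Fin k → Fin t → Fin (o i) → ℝ),
      (∀ j, 0 ≤ p j) ∧ (∑ j, p j = 1) ∧
      (∀ j x y, 0 ≤ ν j x y) ∧ (∀ j x, ∑ y, ν j x y = 1) ∧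
      ∀ y, (A i).M y = ∑ j, ∑ x, ((p j * ν j x y : ℝ) : ℂ) • (B j).M x) :
    ∃ (r : ℕ) (G : POVM (Fin k → Fin d) (Fin r))
      (μ : (i : Fin n) → Fin r → Fin (o i) → ℝ),
      (∀ i z y, 0 ≤ μ i z y) ∧ (∀ i z, ∑ y, μ i z y = 1) ∧
      ∀ ρ : Matrix (Fin d) (Fin d) ℂ, ρ.PosSemidef → ρ.trace = 1 →
        ∀ (i : Fin n) (y : Fin (o i)),
          ∑ z, ((μ i z y : ℝ) : ℂ) * (G.M z * kronPow k ρ).trace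
            = ((A i).M y * ρ).trace := by
  choose p ν hp hps hν hνs hA using hsim
  let e : (Fin k → Fin t) ≃ Fin (t ^ k) := finFunctionFinEquiv
  refine ⟨t ^ k, (POVM.pi B).reindex e, fun i z y => ∑ j, p i j * ν i j (e.symm z j) y,
    fun i z y => Finset.sum_nonneg fun j _ => mul_nonneg (hp i j) (hν i j _ y), ?_, ?_⟩
  · intro i z
    rw [Finset.sum_comm]
    simp only [← Finset.mul_sum, hνs, mul_one, hps]
  · intro ρ _ hρ i y
    calc _ = ∑ f : Fin k → Fin t, (∑ j, ((p i j * ν i j (f j) y : ℝ) : ℂ)) *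
            ∏ j, ((B j).M (f j) * ρ).trace := by
          rw [← e.sum_comp]
          simp only [POVM.reindex, Function.comp_apply, Equiv.symm_apply_apply,
            POVM.trace_pi_mul_kronPow, Complex.ofReal_sum]
      _ = ∑ j, ∑ x, ((p i j * ν i j x y : ℝ) : ℂ) * ((B j).M x * ρ).trace :=
          Fintype.sum_sum_mul_prod_eq_of_sum_eq_one (fun j x => ((B j).M x * ρ).trace)
            (fun j => (B j).sum_trace_mul hρ) fun j x => ((p i j * ν i j x y : ℝ) : ℂ)
      _ = ((A i).M y * ρ).trace := by
          simp only [hA i y, Finset.sum_mul, smul_mul, trace_sum, trace_smul, smul_eq_mul]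
end

section
/- Let B = {B^(1),…,B^(m)} be a collection of m observables on a state space S with a common finite outcome set Ω, and let A be a dichotomic observable with effects A₊ and A₋. If A₊ lies in the convex hull of the set consisting of all effects B^(i)_x (1 ≤ i ≤ m, x ∈ Ω) together with the zero effect o and the unit effect u, then A ∈ sim(B). -/
open scoped BigOperators

variable {V : Type*} [NormedAddCommGroup V] [NormedSpace ℝ V] {S : Set V}

lemma sum_eq_two_aux {n : ℕ} (h : n = 2) (f : Fin n → ℝ) :
    ∑ i, f i = f ⟨0, by omega⟩ + f ⟨1, by omega⟩ := by
  subst h; rw [Fin.sum_univ_two]; rfl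

lemma sum_cast_aux {n k : ℕ} (h : n = k) (f : Fin n → ℝ) :
    ∑ x : Fin k, f (Fin.cast h.symm x) = ∑ x : Fin n, f x := by
  subst h; rfl

/-- if the `+` effect of a dichotomic observable `A` lies in the convex
hull of the effects of the observables `B⁽¹⁾,…,B⁽ᵐ⁾` (which share a common outcome
set) together with the zero and unit effects, then `A` is simulable by them. -/
theorem statement12 {V : Type*} [NormedAddCommGroup V] [NormedSpace ℝ V]
    [FiniteDimensional ℝ V] {S : Set V}
    (hScomp : IsCompact S) (hSconv : Convex ℝ S) (hSne : S.Nonempty)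
    (m : ℕ) (hm : 0 < m) (B : Fin m → Obs S) (k : ℕ) (hk : ∀ i, (B i).n = k)
    (A : Obs S) (hA2 : A.n = 2)
    (hconv : A.eff ⟨0, by omega⟩ ∈
      convexHull ℝ
        ({e : S → ℝ | ∃ i x, e = (B i).eff x} ∪ {0, fun _ => (1 : ℝ)})) :
    Simulable (Set.range B) A := by
  classical
  obtain ⟨s₀, hs₀⟩ := hSne
  set i₀ : Fin m := ⟨0, hm⟩ with hi₀
  have hk0 : 0 < k := by
    rcases Nat.eq_zero_or_pos k with h0 | h
    · exfalso
      have hn0 : (B i₀).n = 0 := (hk i₀).trans h0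
      have hnorm := (B i₀).normalized ⟨s₀, hs₀⟩
      haveI : IsEmpty (Fin (B i₀).n) := by rw [hn0]; infer_instance
      simp at hnorm
    · exact h
  rw [convexHull_eq] at hconv
  obtain ⟨ι, t, w, z, hw0, hw1, hzmem, hcm⟩ := hconv
  rw [Finset.centerMass_eq_of_sum_1 _ _ hw1] at hcm
  set N := t.card with hN
  set e : Fin N ≃ t := t.equivFin.symm with he
  have hchoice : ∀ j : Fin N, ∃ (i : Fin m) (c : Fin k → ℝ),
      (∀ x, 0 ≤ c x ∧ c x ≤ 1) ∧
      ∀ s : S, ∑ x, c x * (B i).eff (Fin.cast (hk i).symm x) s = z (e j) s := by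
    intro j
    have hmem := hzmem (e j) (e j).2
    simp only [Set.mem_union, Set.mem_setOf_eq, Set.mem_insert_iff,
      Set.mem_singleton_iff] at hmem
    rcases hmem with ⟨i, x, hzi⟩ | hz | hz
    · refine ⟨i, fun x' => if Fin.cast (hk i).symm x' = x then 1 else 0, ?_, ?_⟩
      · intro x'
        by_cases h : Fin.cast (hk i).symm x' = x <;> simp [h]
      · intro s
        rw [hzi]
        rw [sum_cast_aux (hk i)
          (fun x'' => (if x'' = x then (1:ℝ) else 0) * (B i).eff x'' s)]
        simp [ite_mul]
    · refine ⟨i₀, fun _ => 0, fun _ => by norm_num, fun s => by simp [hz]⟩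
    · refine ⟨i₀, fun _ => 1, fun _ => by norm_num, fun s => ?_⟩
      simp only [one_mul, hz]
      rw [sum_cast_aux (hk i₀) (fun x'' => (B i₀).eff x'' s)]
      exact (B i₀).normalized s
  choose sel c hc1 hc2 using hchoice
  set νf : Fin N → Fin k → Fin A.n → ℝ :=
    fun j x y => if (y : ℕ) = 0 then c j x else 1 - c j x with hνf
  have hsum_idx : ∀ f : ι → ℝ, ∑ j : Fin N, f (e j) = ∑ i ∈ t, f i := by
    intro f
    rw [← Finset.sum_coe_sort t f]
    exact Fintype.sum_equiv e _ _ (fun _ => rfl)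
  have key : ∀ s, A.eff ⟨0, by omega⟩ s = ∑ j : Fin N, w (e j) * z (e j) s := by
    intro s
    have h1 := congrFun hcm s
    rw [Finset.sum_apply] at h1
    simp only [Pi.smul_apply, smul_eq_mul] at h1
    rw [← h1, hsum_idx (fun i => w i * z i s)]
  refine ⟨N, k, fun j => B (sel j), fun j => hk (sel j), fun j => w (e j), νf,
    fun j => ⟨sel j, rfl⟩, fun j => hw0 (e j) (e j).2, ?_, ?_, ?_, ?_⟩
  · rw [hsum_idx w]; exact hw1
  · intro j x y
    simp only [hνf]
    split
    · exact (hc1 j x).1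
    · linarith [(hc1 j x).2]
  · intro j x
    rw [sum_eq_two_aux hA2 (νf j x)]
    simp [hνf]
  · intro y s
    have hylt := y.isLt
    have hy : (y : ℕ) = 0 ∨ (y : ℕ) = 1 := by omega
    rcases hy with hy | hy
    · have hy0 : y = ⟨0, by omega⟩ := Fin.ext hy
      rw [hy0, key s]
      refine Finset.sum_congr rfl fun j _ => ?_
      rw [← hc2 j s, Finset.mul_sum]
      refine Finset.sum_congr rfl fun x _ => ?_
      simp only [hνf, Fin.val_mk, if_pos rfl]
      ring
    · have hy1 : y = ⟨1, by omega⟩ := Fin.ext hy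
      have hnorm := A.normalized s
      rw [sum_eq_two_aux hA2 (fun y' => A.eff y' s)] at hnorm
      have inner : ∀ j : Fin N,
          ∑ x, w (e j) * νf j x y * (B (sel j)).eff (Fin.cast (hk (sel j)).symm x) s
            = w (e j) * (1 - z (e j) s) := by
        intro j
        have hsum1 : ∑ x : Fin k, (B (sel j)).eff (Fin.cast (hk (sel j)).symm x) s = 1 := by
          rw [sum_cast_aux (hk (sel j)) (fun x => (B (sel j)).eff x s)]
          exact (B (sel j)).normalized s
        have hz := hc2 j s
        have step : ∀ x : Fin k,
            w (e j) * νf j x y * (B (sel j)).eff (Fin.cast (hk (sel j)).symm x) s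
              = w (e j) * (B (sel j)).eff (Fin.cast (hk (sel j)).symm x) s
                - w (e j) * (c j x * (B (sel j)).eff (Fin.cast (hk (sel j)).symm x) s) := by
          intro x
          simp only [hνf, hy1, Fin.val_mk]
          norm_num
          ring
        rw [Finset.sum_congr rfl fun x _ => step x, Finset.sum_sub_distrib,
          ← Finset.mul_sum, ← Finset.mul_sum, hsum1, hz]
        ring
      rw [Finset.sum_congr rfl fun j _ => inner j]
      have hs2 : ∑ j : Fin N, w (e j) * (1 - z (e j) s)
          = ∑ j : Fin N, w (e j) - ∑ j : Fin N, w (e j) * z (e j) s := by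
        rw [← Finset.sum_sub_distrib]
        exact Finset.sum_congr rfl fun j _ => by ring
      rw [hs2, hsum_idx w, hw1, ← key s, hy1]
      linarith
end

section
/- Let B = {B^(1),…,B^(m)} be a collection of m dichotomic observables on a state space S such that the set {u, B^(1)_+,…,B^(m)_+} is linearly independent in the vector space of affine functionals on S. If A is an observable with finite outcome set Λ such that every effect A_y (y ∈ Λ) lies in the convex hull of {B^(i)_+, B^(i)_− : 1 ≤ i ≤ m} ∪ {o, u}, then A ∈ sim(B). -/
open scoped BigOperators

variable {V : Type*} [NormedAddCommGroup V] [NormedSpace ℝ V] {S : Set V}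

/-- if `B⁽¹⁾,…,B⁽ᵐ⁾` are dichotomic observables with
`{u, B⁽¹⁾₊, …, B⁽ᵐ⁾₊}` linearly independent, then any observable all of whose
effects lie in the convex hull of their effects together with the zero and unit
effects is simulable by them. -/
theorem statement13 {V : Type*} [NormedAddCommGroup V] [NormedSpace ℝ V]
    [FiniteDimensional ℝ V] {S : Set V}
    (hScomp : IsCompact S) (hSconv : Convex ℝ S) (hSne : S.Nonempty)
    (m : ℕ) (hm : 0 < m) (B : Fin m → Obs S) (hd : ∀ i, (B i).n = 2)
    (hli : LinearIndependent ℝ (fun o : Option (Fin m) =>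
      o.elim (fun _ : S => (1 : ℝ))
        (fun i => (B i).eff ⟨0, by have := hd i; omega⟩)))
    (A : Obs S)
    (hconv : ∀ y : Fin A.n, A.eff y ∈
      convexHull ℝ
        ({e : S → ℝ | ∃ i x, e = (B i).eff x} ∪ {0, fun _ => (1 : ℝ)})) :
    Simulable (Set.range B) A := by
  classical
  obtain ⟨s₀, hs₀⟩ := hSne
  set E : Fin m → Fin 2 → S → ℝ := fun i x => (B i).eff (Fin.cast (hd i).symm x) with hE
  have hEnorm : ∀ i (s : S), E i 0 s + E i 1 s = 1 := by
    intro i s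
    have h := (B i).normalized s
    have h2 : ∑ x : Fin (B i).n, (B i).eff x s
        = ∑ x : Fin 2, (B i).eff (Fin.cast (hd i).symm x) s := by
      refine Fintype.sum_equiv (finCongr (hd i)) _ _ fun x => ?_
      simp
    rw [h2, Fin.sum_univ_two] at h
    simpa [hE] using h
  have hEnn : ∀ i x (s : S), 0 ≤ E i x s := fun i x s => (B i).nonneg _ s
  -- the convex cone of nonnegative combinations
  set C : Set (S → ℝ) := {e | ∃ a : Fin m → Fin 2 → ℝ, (∀ i x, 0 ≤ a i x) ∧
      ∀ s, e s = ∑ i, ∑ x, a i x * E i x s} with hC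
  have hCconv : Convex ℝ C := by
    rintro e₁ ⟨a₁, h₁n, h₁e⟩ e₂ ⟨a₂, h₂n, h₂e⟩ p q hp hq hpq
    refine ⟨fun i x => p * a₁ i x + q * a₂ i x,
      fun i x => by have := h₁n i x; have := h₂n i x; positivity, fun s => ?_⟩
    have hps : (p • e₁ + q • e₂) s = p * e₁ s + q * e₂ s := rfl
    rw [hps, h₁e s, h₂e s, Finset.mul_sum, Finset.mul_sum, ← Finset.sum_add_distrib]
    refine Finset.sum_congr rfl fun i _ => ?_
    rw [Finset.mul_sum, Finset.mul_sum, ← Finset.sum_add_distrib]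
    exact Finset.sum_congr rfl fun x _ => by ring
  have hgen : ({e : S → ℝ | ∃ i x, e = (B i).eff x} ∪ {0, fun _ => (1 : ℝ)}) ⊆ C := by
    rintro e (⟨i, x, rfl⟩ | he)
    · refine ⟨fun i' x' => (if i' = i then 1 else 0) * (if x' = Fin.cast (hd i) x then 1 else 0),
        fun i' x' => by positivity, fun s => ?_⟩
      simp [ite_mul, one_mul, zero_mul, Finset.sum_ite_eq', hE]
    · rcases he with he | he
      · refine ⟨0, by simp, fun s => ?_⟩
        simp [he]
      · refine ⟨fun i' _ => if i' = ⟨0, hm⟩ then 1 else 0, fun i' x' => by positivity,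
          fun s => ?_⟩
        rw [he]
        rw [Finset.sum_eq_single (⟨0, hm⟩ : Fin m)]
        · simp [Fin.sum_univ_two, hEnorm]
        · intro b _ hb; simp [hb]
        · simp
  have hmem : ∀ y, A.eff y ∈ C := fun y => convexHull_min hgen hCconv (hconv y)
  choose a hann haeq using hmem
  set c : Fin m → ℝ := fun i => ∑ y, a y i 0 with hc
  set dd : Fin m → ℝ := fun i => ∑ y, a y i 1 with hdd
  have hkey : ∀ s : S, ∑ i, (c i * E i 0 s + dd i * E i 1 s) = 1 := by
    intro s
    have h1 := A.normalized s
    calc ∑ i, (c i * E i 0 s + dd i * E i 1 s)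
        = ∑ i, ∑ x : Fin 2, (∑ y, a y i x) * E i x s := by
          refine Finset.sum_congr rfl fun i _ => ?_
          rw [Fin.sum_univ_two]
      _ = ∑ i, ∑ x : Fin 2, ∑ y, a y i x * E i x s := by
          refine Finset.sum_congr rfl fun i _ => Finset.sum_congr rfl fun x _ => ?_
          rw [Finset.sum_mul]
      _ = ∑ i, ∑ y, ∑ x : Fin 2, a y i x * E i x s :=
          Finset.sum_congr rfl fun i _ => Finset.sum_comm
      _ = ∑ y, ∑ i, ∑ x : Fin 2, a y i x * E i x s := Finset.sum_comm
      _ = ∑ y, A.eff y s := Finset.sum_congr rfl fun y _ => (haeq y s).symm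
      _ = 1 := h1
  have hzero : ∀ s : S, (1 - ∑ i, dd i) * 1 + ∑ i, (dd i - c i) * E i 0 s = 0 := by
    intro s
    have h2 := hkey s
    have h3 : ∀ i ∈ Finset.univ, c i * E i 0 s + dd i * E i 1 s
        = dd i + (c i - dd i) * E i 0 s := by
      intro i _
      have h1e : E i 1 s = 1 - E i 0 s := by linarith [hEnorm i s]
      rw [h1e]; ring
    rw [Finset.sum_congr rfl h3, Finset.sum_add_distrib] at h2
    have h5 : ∑ i, (dd i - c i) * E i 0 s = - ∑ i, (c i - dd i) * E i 0 s := by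
      rw [← Finset.sum_neg_distrib]
      exact Finset.sum_congr rfl fun i _ => by ring
    rw [h5]
    linarith
  rw [Fintype.linearIndependent_iff] at hli
  have hE0 : ∀ (i : Fin m) (pf : 0 < (B i).n), (B i).eff ⟨0, pf⟩ = E i 0 := by
    intro i pf
    rw [hE]
    congr 1
  have hg0 : ∀ o : Option (Fin m),
      (Option.elim o (1 - ∑ i, dd i) (fun i => dd i - c i)) = 0 := by
    refine hli (fun o => Option.elim o (1 - ∑ i, dd i) (fun i => dd i - c i)) ?_
    funext s
    rw [Finset.sum_apply, Fintype.sum_option]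
    simp only [Option.elim, Pi.smul_apply, smul_eq_mul, Pi.zero_apply]
    simp only [hE0]
    exact hzero s
  have hd1 : ∑ i, dd i = 1 := by
    have := hg0 none
    simp only [Option.elim] at this
    linarith
  have hcd : ∀ i, c i = dd i := by
    intro i
    have := hg0 (some i)
    simp only [Option.elim] at this
    linarith
  have hdnn : ∀ i, 0 ≤ dd i := fun i => Finset.sum_nonneg fun y _ => hann y i 1
  have hAne : A.n ≠ 0 := by
    intro h
    have h1 := A.normalized ⟨s₀, hs₀⟩
    rw [Finset.sum_eq_zero (fun x _ => absurd x.2 (by omega))] at h1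
    exact one_ne_zero h1.symm
  have hax : ∀ i (x : Fin 2), ∑ y, a y i x = dd i := by
    intro i x
    fin_cases x
    · exact hcd i
    · rfl
  refine ⟨m, 2, B, hd, dd, fun i x y => if dd i = 0 then (A.n : ℝ)⁻¹ else a y i x / dd i,
    fun i => ⟨i, rfl⟩, hdnn, hd1, ?_, ?_, ?_⟩
  · intro i x y
    dsimp only
    split
    · positivity
    · exact div_nonneg (hann y i x) (hdnn i)
  · intro i x
    dsimp only
    split
    · rw [Finset.sum_const, Finset.card_univ, Fintype.card_fin, nsmul_eq_mul]
      field_simp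
    · rw [← Finset.sum_div, hax i x, div_self (by assumption)]
  · intro y s
    rw [haeq y s]
    refine Finset.sum_congr rfl fun i _ => Finset.sum_congr rfl fun x _ => ?_
    by_cases h : dd i = 0
    · have hz : a y i x = 0 := by
        have h7 : ∑ y', a y' i x = 0 := by rw [hax i x, h]
        have := (Finset.sum_eq_zero_iff_of_nonneg (fun y' _ => hann y' i x)).1 h7 y
          (Finset.mem_univ y)
        exact this
      dsimp only
      simp [h, hz, hE]
    · dsimp only
      rw [if_neg h]
      simp only [hE]
      field_simp
end

section
/- Let B be an observable on a state space S with finite outcome set Ω whose effects {B_x : x ∈ Ω} are linearly independent in the vector space of affine functionals on S. If A is an observable with finite outcome set Λ such that every effect A_y (y ∈ Λ) lies in the convex hull of {B_x : x ∈ Ω} ∪ {o, u}, then A is a postprocessing of B; in particular A ∈ sim({B}). -/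
open scoped BigOperators

variable {V : Type*} [NormedAddCommGroup V] [NormedSpace ℝ V] {S : Set V}

/-- if `B` has linearly independent effects and every effect of `A`
lies in the convex hull of the effects of `B` together with the zero and unit
effects, then `A` is a postprocessing of `B`; in particular `A ∈ sim({B})`. -/
theorem statement14 {V : Type*} [NormedAddCommGroup V] [NormedSpace ℝ V]
    [FiniteDimensional ℝ V] {S : Set V}
    (hScomp : IsCompact S) (hSconv : Convex ℝ S) (hSne : S.Nonempty)
    (B : Obs S) (hli : LinearIndependent ℝ B.eff)
    (A : Obs S)
    (hconv : ∀ y : Fin A.n, A.eff y ∈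
      convexHull ℝ (Set.range B.eff ∪ {0, fun _ => (1 : ℝ)})) :
    Postprocess B A ∧ Simulable {B} A := by
  classical
  set C : Set (S → ℝ) :=
    {f | ∃ c : Fin B.n → ℝ, (∀ x, 0 ≤ c x) ∧ f = ∑ x, c x • B.eff x} with hC
  have hCconv : Convex ℝ C := by
    rintro f ⟨c, hc, rfl⟩ g ⟨d, hd, rfl⟩ a b ha hb hab
    refine ⟨fun x => a * c x + b * d x, fun x => add_nonneg (mul_nonneg ha (hc x)) (mul_nonneg hb (hd x)), ?_⟩
    simp only [Finset.smul_sum, ← Finset.sum_add_distrib, smul_smul, add_smul]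
  have hsub : Set.range B.eff ∪ {0, fun _ => (1 : ℝ)} ⊆ C := by
    rintro f (⟨x, rfl⟩ | rfl | rfl)
    · refine ⟨fun x' => if x' = x then 1 else 0, fun x' => by by_cases h : x' = x <;> simp [h], ?_⟩
      simp
    · exact ⟨0, fun _ => le_refl _, by simp⟩
    · refine ⟨fun _ => 1, fun _ => zero_le_one, ?_⟩
      funext s
      simpa using (B.normalized s).symm
  have hhull := convexHull_min hsub hCconv
  choose c hc hrep using fun y => hhull (hconv y)
  have hsum : ∀ x, ∑ y, c y x = 1 := by
    have key : ∑ x, ((∑ y, c y x) - 1) • B.eff x = 0 := by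
      have h1 : ∑ y, A.eff y = ∑ x, B.eff x := by
        funext s
        simp only [Finset.sum_apply]
        rw [A.normalized s, B.normalized s]
      calc ∑ x, ((∑ y, c y x) - 1) • B.eff x
          = ∑ x, ((∑ y, c y x) • B.eff x) - ∑ x, B.eff x := by
            simp [sub_smul, Finset.sum_sub_distrib]
        _ = ∑ y, A.eff y - ∑ x, B.eff x := by
            congr 1
            simp only [Finset.sum_smul]
            rw [Finset.sum_comm]
            exact Finset.sum_congr rfl fun y _ => (hrep y).symm
        _ = 0 := by rw [h1]; simp
    intro x
    have := Fintype.linearIndependent_iff.mp hli (fun x => (∑ y, c y x) - 1) key x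
    linarith
  have hpp : Postprocess B A := by
    refine ⟨fun x y => c y x, fun x y => hc y x, hsum, fun y s => ?_⟩
    rw [hrep y]
    simp [Finset.sum_apply]
  refine ⟨hpp, ?_⟩
  refine ⟨1, B.n, fun _ => B, fun _ => rfl, fun _ => 1, fun _ x y => c y x,
    fun _ => rfl, fun _ => zero_le_one, by simp, fun _ x y => hc y x,
    fun _ x => hsum x, fun y s => ?_⟩
  rw [hrep y]
  simp [Finset.sum_apply]
end
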